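/- arXiv:2405.09501 — 5 statements merged into one kernel-verified Lean document; each statement's English description precedes it below -/
import Mathlib

section
/- Let λ > 0, α > 0 and N ≥ 1, and let μ be a positive function on H_N satisfying the balance equations of the regenerative contact process. Write u_n = μ(0,n), v_n = μ(1,n), set a_n = n·u_n for 1 ≤ n ≤ N, a_0 = (α/(1+λ))·u_0, and adopt the conventions u_{N+1} = u_{N+2} = v_{N+1} = v_{N+2} = 0 (hence a_{N+1} = a_{N+2} = 0). Then for all 0 ≤ n ≤ N: (i) v_n = (1+λ)a_n − a_{n+1}; (ii) a_{n+1} = λ(N−n)v_n − (n+1)v_{n+1}; (iii) (n+1)a_{n+2} − (n+2+λ(N+1))a_{n+1} + λ(1+λ)(N−n)a_n = 0; and (iv) (n+2)v_{n+2} − (n+2+λN)v_{n+1} + λ(1+λ)(N−n)v_n = 0. -/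
open Finset

/-- State space of the contact process on the star with `N` leaves:
`{0,1} × {0,1,…,N}`. -/
def starStates (N : ℕ) : Finset (ℕ × ℕ) := ({0, 1} : Finset ℕ) ×ˢ Finset.range (N + 1)

/-- Jump rates of the contact process on the star with `N` leaves and infection rate `lam`. -/
noncomputable def starRate (lam : ℝ) (N : ℕ) (x y : ℕ × ℕ) : ℝ :=
  if x.1 = 1 ∧ y.1 = 1 ∧ y.2 = x.2 + 1 ∧ x.2 + 1 ≤ N then lam * ((N : ℝ) - x.2)
  else if x.1 = 1 ∧ y.1 = 1 ∧ x.2 = y.2 + 1 ∧ x.2 ≤ N then (x.2 : ℝ)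
  else if x.1 = 0 ∧ y.1 = 0 ∧ x.2 = y.2 + 1 ∧ x.2 ≤ N then (x.2 : ℝ)
  else if x.1 = 1 ∧ y.1 = 0 ∧ y.2 = x.2 ∧ x.2 ≤ N then 1
  else if x.1 = 0 ∧ y.1 = 1 ∧ y.2 = x.2 ∧ 1 ≤ x.2 ∧ x.2 ≤ N then lam * (x.2 : ℝ)
  else 0

/-- Jump rates of the regenerative contact process: the contact process rates plus the
supplementary rate `alpha` from `(0,0)` to `(1,0)`. -/
noncomputable def regenRate (lam alpha : ℝ) (N : ℕ) (x y : ℕ × ℕ) : ℝ :=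
  if x = (0, 0) ∧ y = (1, 0) then alpha else starRate lam N x y

/-- `μ` satisfies the balance (stationarity) equations of the regenerative process. -/
def IsBalanced (lam alpha : ℝ) (N : ℕ) (μ : ℕ × ℕ → ℝ) : Prop :=
  ∀ x ∈ starStates N,
    ∑ y ∈ starStates N, μ y * regenRate lam alpha N y x =
      μ x * ∑ y ∈ starStates N, regenRate lam alpha N x y

/-- `u_n = μ(0,n)` with the convention `u_n = 0` for `n > N`. -/
noncomputable def uSeq (N : ℕ) (μ : ℕ × ℕ → ℝ) (n : ℕ) : ℝ := if n ≤ N then μ (0, n) else 0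

/-- `v_n = μ(1,n)` with the convention `v_n = 0` for `n > N`. -/
noncomputable def vSeq (N : ℕ) (μ : ℕ × ℕ → ℝ) (n : ℕ) : ℝ := if n ≤ N then μ (1, n) else 0

/-- `a_n = n·u_n` for `n ≥ 1` and `a_0 = (α/(1+λ))·u_0`. -/
noncomputable def aSeq (lam alpha : ℝ) (N : ℕ) (μ : ℕ × ℕ → ℝ) (n : ℕ) : ℝ :=
  if n = 0 then alpha / (1 + lam) * uSeq N μ 0 else (n : ℝ) * uSeq N μ n

section
variable (lam alpha : ℝ) (N : ℕ) (μ : ℕ × ℕ → ℝ)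

lemma rate00 (k n : ℕ) : regenRate lam alpha N (0,k) (0,n) = if k = n+1 ∧ k ≤ N then (k:ℝ) else 0 := by
  simp [regenRate, starRate, Prod.ext_iff]

lemma rate10 (k n : ℕ) : regenRate lam alpha N (1,k) (0,n) = if k = n ∧ k ≤ N then 1 else 0 := by
  simp [regenRate, starRate, Prod.ext_iff, eq_comm]

lemma rate01 (k n : ℕ) : regenRate lam alpha N (0,k) (1,n) =
    if k = 0 ∧ n = 0 then alpha else if k = n ∧ 1 ≤ k ∧ k ≤ N then lam * (k:ℝ) else 0 := by
  simp [regenRate, starRate, Prod.ext_iff, eq_comm]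

lemma rate11 (k n : ℕ) : regenRate lam alpha N (1,k) (1,n) =
    if n = k+1 ∧ k+1 ≤ N then lam * ((N:ℝ) - k)
    else if k = n+1 ∧ k ≤ N then (k:ℝ) else 0 := by
  simp [regenRate, starRate, Prod.ext_iff]

lemma sum_pt {s : Finset ℕ} (j : ℕ) {f : ℕ → ℝ} (c : ℝ)
    (h : ∀ k ∈ s, f k = if k = j then c else 0) (hc : j ∉ s → c = 0) :
    ∑ k ∈ s, f k = c := by
  rw [Finset.sum_congr rfl h, Finset.sum_ite_eq']
  split_ifs with hj
  · rfl
  · exact (hc hj).symm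

lemma sum_pt2 {s : Finset ℕ} (i j : ℕ) {f : ℕ → ℝ} (c d : ℝ)
    (h : ∀ k ∈ s, f k = (if k = i then c else 0) + (if k = j then d else 0))
    (hc : i ∉ s → c = 0) (hd : j ∉ s → d = 0) :
    ∑ k ∈ s, f k = c + d := by
  rw [Finset.sum_congr rfl h, Finset.sum_add_distrib, Finset.sum_ite_eq', Finset.sum_ite_eq']
  split_ifs with hi hj hj
  · rfl
  · rw [hd hj]
  · rw [hc hi]
  · rw [hc hi, hd hj]

lemma sum_star (f : ℕ × ℕ → ℝ) :
    ∑ y ∈ starStates N, f y =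
      ∑ k ∈ Finset.range (N+1), f (0,k) + ∑ k ∈ Finset.range (N+1), f (1,k) := by
  rw [starStates, Finset.sum_product, Finset.sum_pair (by norm_num : (0:ℕ) ≠ 1)]

lemma mem_star {i k : ℕ} (hi : i = 0 ∨ i = 1) (hk : k ≤ N) : (i, k) ∈ starStates N := by
  simp only [starStates, Finset.mem_product, Finset.mem_range, Finset.mem_insert,
    Finset.mem_singleton]
  exact ⟨hi, by omega⟩

variable {lam alpha N μ}

lemma mem_range_of_le {k : ℕ} (hk : k ≤ N) : k ∈ Finset.range (N+1) :=
  Finset.mem_range.mpr (by omega)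

lemma bal0_zero (hN : 1 ≤ N) (hbal : IsBalanced lam alpha N μ) :
    uSeq N μ 1 + vSeq N μ 0 = alpha * uSeq N μ 0 := by
  have h := hbal (0, 0) (mem_star N (Or.inl rfl) (Nat.zero_le N))
  rw [sum_star, sum_star] at h
  have hA : ∑ k ∈ Finset.range (N+1), μ (0,k) * regenRate lam alpha N (0,k) (0,0)
      = uSeq N μ 1 := by
    refine sum_pt 1 _ (fun k hk => ?_) (fun h1 => absurd (mem_range_of_le hN) h1)
    rw [rate00]
    by_cases hk1 : k = 1
    · subst hk1; rw [if_pos ⟨rfl, hN⟩, if_pos rfl, uSeq, if_pos hN]; push_cast; ring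
    · rw [if_neg (fun hh => hk1 (by omega)), if_neg hk1, mul_zero]
  have hB : ∑ k ∈ Finset.range (N+1), μ (1,k) * regenRate lam alpha N (1,k) (0,0)
      = vSeq N μ 0 := by
    refine sum_pt 0 _ (fun k hk => ?_) (fun h1 => absurd (mem_range_of_le (Nat.zero_le N)) h1)
    rw [rate10]
    by_cases hk0 : k = 0
    · subst hk0; rw [if_pos ⟨rfl, Nat.zero_le N⟩, if_pos rfl, vSeq, if_pos (Nat.zero_le N)]; ring
    · rw [if_neg (fun hh => hk0 hh.1), if_neg hk0, mul_zero]
  have hC : ∑ k ∈ Finset.range (N+1), regenRate lam alpha N (0,0) (0,k) = (0:ℝ) := by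
    refine Finset.sum_eq_zero (fun k hk => ?_)
    rw [rate00]; rw [if_neg (fun hh => by omega)]
  have hD : ∑ k ∈ Finset.range (N+1), regenRate lam alpha N (0,0) (1,k) = alpha := by
    refine sum_pt 0 _ (fun k hk => ?_) (fun h1 => absurd (mem_range_of_le (Nat.zero_le N)) h1)
    rw [rate01]
    by_cases hk0 : k = 0
    · subst hk0; rw [if_pos ⟨rfl, rfl⟩, if_pos rfl]
    · rw [if_neg (fun hh => hk0 hh.2), if_neg (fun hh => absurd hh.2.1 (by omega)), if_neg hk0]
  rw [hA, hB, hC, hD] at h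
  rw [show uSeq N μ 0 = μ (0,0) from if_pos (Nat.zero_le N)]
  linarith [h]

lemma bal0_succ (n : ℕ) (h1 : n + 1 ≤ N) (hbal : IsBalanced lam alpha N μ) :
    ((n:ℝ)+2) * uSeq N μ (n+2) + vSeq N μ (n+1) = (1+lam) * ((n:ℝ)+1) * uSeq N μ (n+1) := by
  have h := hbal (0, n+1) (mem_star N (Or.inl rfl) h1)
  rw [sum_star, sum_star] at h
  have hA : ∑ k ∈ Finset.range (N+1), μ (0,k) * regenRate lam alpha N (0,k) (0,n+1)
      = ((n:ℝ)+2) * uSeq N μ (n+2) := by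
    refine sum_pt (n+2) _ (fun k hk => ?_) (fun h2 => ?_)
    · simp only [Finset.mem_range] at hk
      rw [rate00]
      by_cases hk2 : k = n+2
      · subst hk2
        rw [if_pos ⟨by omega, by omega⟩, if_pos rfl, uSeq, if_pos (by omega)]
        push_cast; ring
      · rw [if_neg (fun hh => hk2 (by omega)), if_neg hk2, mul_zero]
    · simp only [Finset.mem_range, not_lt] at h2
      rw [uSeq, if_neg (by omega), mul_zero]
  have hB : ∑ k ∈ Finset.range (N+1), μ (1,k) * regenRate lam alpha N (1,k) (0,n+1)
      = vSeq N μ (n+1) := by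
    refine sum_pt (n+1) _ (fun k hk => ?_) (fun h2 => absurd (mem_range_of_le h1) h2)
    rw [rate10]
    by_cases hk1 : k = n+1
    · subst hk1; rw [if_pos ⟨rfl, h1⟩, if_pos rfl, vSeq, if_pos h1]; ring
    · rw [if_neg (fun hh => hk1 hh.1), if_neg hk1, mul_zero]
  have hC : ∑ k ∈ Finset.range (N+1), regenRate lam alpha N (0,n+1) (0,k)
      = (n:ℝ)+1 := by
    refine sum_pt n _ (fun k hk => ?_) (fun h2 => absurd (mem_range_of_le (by omega)) h2)
    rw [rate00]
    by_cases hkn : k = n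
    · subst hkn; rw [if_pos ⟨rfl, h1⟩, if_pos rfl]; push_cast; ring
    · rw [if_neg (fun hh => hkn (by omega)), if_neg hkn]
  have hD : ∑ k ∈ Finset.range (N+1), regenRate lam alpha N (0,n+1) (1,k)
      = lam * ((n:ℝ)+1) := by
    refine sum_pt (n+1) _ (fun k hk => ?_) (fun h2 => absurd (mem_range_of_le h1) h2)
    rw [rate01]
    by_cases hk1 : k = n+1
    · subst hk1
      rw [if_neg (fun hh => absurd hh.1 (by omega)), if_pos ⟨rfl, by omega, h1⟩, if_pos rfl]
      push_cast; ring
    · rw [if_neg (fun hh => absurd hh.1 (by omega)), if_neg (fun hh => hk1 hh.1.symm),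
        if_neg hk1]
  rw [hA, hB, hC, hD] at h
  rw [show uSeq N μ (n+1) = μ (0,n+1) from if_pos h1]
  linear_combination h

lemma bal1_zero (hN : 1 ≤ N) (hbal : IsBalanced lam alpha N μ) :
    alpha * uSeq N μ 0 + vSeq N μ 1 = (lam * (N:ℝ) + 1) * vSeq N μ 0 := by
  have h := hbal (1, 0) (mem_star N (Or.inr rfl) (Nat.zero_le N))
  rw [sum_star, sum_star] at h
  have hA : ∑ k ∈ Finset.range (N+1), μ (0,k) * regenRate lam alpha N (0,k) (1,0)
      = alpha * uSeq N μ 0 := by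
    refine sum_pt 0 _ (fun k hk => ?_) (fun h2 => absurd (mem_range_of_le (Nat.zero_le N)) h2)
    rw [rate01]
    by_cases hk0 : k = 0
    · subst hk0; rw [if_pos ⟨rfl, rfl⟩, if_pos rfl, uSeq, if_pos (Nat.zero_le N)]; ring
    · rw [if_neg (fun hh => hk0 hh.1), if_neg (fun hh => hk0 hh.1), if_neg hk0, mul_zero]
  have hB : ∑ k ∈ Finset.range (N+1), μ (1,k) * regenRate lam alpha N (1,k) (1,0)
      = vSeq N μ 1 := by
    refine sum_pt 1 _ (fun k hk => ?_) (fun h2 => absurd (mem_range_of_le hN) h2)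
    rw [rate11]
    by_cases hk1 : k = 1
    · subst hk1
      rw [if_neg (fun hh => absurd hh.1 (by omega)), if_pos ⟨rfl, hN⟩, if_pos rfl,
        vSeq, if_pos hN]
      push_cast; ring
    · rw [if_neg (fun hh => absurd hh.1 (by omega)), if_neg (fun hh => hk1 hh.1),
        if_neg hk1, mul_zero]
  have hC : ∑ k ∈ Finset.range (N+1), regenRate lam alpha N (1,0) (0,k) = (1:ℝ) := by
    refine sum_pt 0 _ (fun k hk => ?_) (fun h2 => absurd (mem_range_of_le (Nat.zero_le N)) h2)
    rw [rate10]
    by_cases hk0 : k = 0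
    · subst hk0; rw [if_pos ⟨rfl, Nat.zero_le N⟩, if_pos rfl]
    · rw [if_neg (fun hh => hk0 hh.1.symm), if_neg hk0]
  have hD : ∑ k ∈ Finset.range (N+1), regenRate lam alpha N (1,0) (1,k)
      = lam * (N:ℝ) := by
    refine sum_pt 1 _ (fun k hk => ?_) (fun h2 => absurd (mem_range_of_le hN) h2)
    rw [rate11]
    by_cases hk1 : k = 1
    · subst hk1; rw [if_pos ⟨rfl, hN⟩, if_pos rfl]; push_cast; ring
    · rw [if_neg (fun hh => hk1 (by omega)), if_neg (fun hh => absurd hh.1 (by omega)),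
        if_neg hk1]
  rw [hA, hB, hC, hD] at h
  rw [show vSeq N μ 0 = μ (1,0) from if_pos (Nat.zero_le N)]
  linear_combination h

lemma bal1_succ (n : ℕ) (h1 : n + 1 ≤ N) (hbal : IsBalanced lam alpha N μ) :
    lam * ((n:ℝ)+1) * uSeq N μ (n+1) + lam * ((N:ℝ) - n) * vSeq N μ n
        + ((n:ℝ)+2) * vSeq N μ (n+2)
      = (lam * ((N:ℝ) - ((n:ℝ)+1)) + (n:ℝ) + 2) * vSeq N μ (n+1) := by
  have h := hbal (1, n+1) (mem_star N (Or.inr rfl) h1)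
  rw [sum_star, sum_star] at h
  have hA : ∑ k ∈ Finset.range (N+1), μ (0,k) * regenRate lam alpha N (0,k) (1,n+1)
      = lam * ((n:ℝ)+1) * uSeq N μ (n+1) := by
    refine sum_pt (n+1) _ (fun k hk => ?_) (fun h2 => absurd (mem_range_of_le h1) h2)
    rw [rate01]
    by_cases hk1 : k = n+1
    · subst hk1
      rw [if_neg (fun hh => absurd hh.2 (by omega)), if_pos ⟨rfl, by omega, h1⟩,
        if_pos rfl, uSeq, if_pos h1]
      push_cast; ring
    · rw [if_neg (fun hh => absurd hh.2 (by omega)), if_neg (fun hh => hk1 hh.1),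
        if_neg hk1, mul_zero]
  have hB : ∑ k ∈ Finset.range (N+1), μ (1,k) * regenRate lam alpha N (1,k) (1,n+1)
      = lam * ((N:ℝ) - n) * vSeq N μ n + ((n:ℝ)+2) * vSeq N μ (n+2) := by
    refine sum_pt2 n (n+2) _ _ (fun k hk => ?_) (fun h2 => absurd (mem_range_of_le (by omega)) h2)
      (fun h2 => ?_)
    · simp only [Finset.mem_range] at hk
      rw [rate11]
      by_cases hkn : k = n
      · subst hkn
        rw [if_pos ⟨rfl, h1⟩, if_pos rfl, if_neg (by omega), add_zero, vSeq, if_pos (by omega)]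
        ring
      · by_cases hk2 : k = n+2
        · subst hk2
          rw [if_neg (fun hh => absurd hh.1 (by omega)), if_pos ⟨rfl, by omega⟩,
            if_neg hkn, if_pos rfl, zero_add, vSeq, if_pos (by omega)]
          push_cast; ring
        · rw [if_neg (fun hh => hkn (by omega)), if_neg (fun hh => hk2 hh.1),
            mul_zero, if_neg hkn, if_neg hk2, add_zero]
    · simp only [Finset.mem_range, not_lt] at h2
      rw [vSeq, if_neg (by omega), mul_zero]
  have hC : ∑ k ∈ Finset.range (N+1), regenRate lam alpha N (1,n+1) (0,k) = (1:ℝ) := by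
    refine sum_pt (n+1) _ (fun k hk => ?_) (fun h2 => absurd (mem_range_of_le h1) h2)
    rw [rate10]
    by_cases hk1 : k = n+1
    · subst hk1; rw [if_pos ⟨rfl, h1⟩, if_pos rfl]
    · rw [if_neg (fun hh => hk1 hh.1.symm), if_neg hk1]
  have hD : ∑ k ∈ Finset.range (N+1), regenRate lam alpha N (1,n+1) (1,k)
      = lam * ((N:ℝ) - ((n:ℝ)+1)) + ((n:ℝ)+1) := by
    refine sum_pt2 (n+2) n _ _ (fun k hk => ?_) (fun h2 => ?_)
      (fun h2 => absurd (mem_range_of_le (by omega)) h2)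
    · simp only [Finset.mem_range] at hk
      rw [rate11]
      by_cases hk2 : k = n+2
      · subst hk2
        by_cases h2 : n+2 ≤ N
        · rw [if_pos ⟨rfl, h2⟩, if_pos rfl, if_neg (by omega), add_zero]
          push_cast; ring
        · have hNn : (N:ℝ) = (n:ℝ)+1 := by
            have : N = n+1 := by omega
            rw [this]; push_cast; ring
          rw [if_neg (fun hh => h2 hh.2), if_neg (fun hh => absurd hh.1 (by omega)),
            if_pos rfl, if_neg (by omega), add_zero, hNn, sub_self, mul_zero]
      · by_cases hkn : k = n
        · subst hkn
          rw [if_neg (fun hh => absurd hh.1 (by omega)), if_pos ⟨by omega, h1⟩,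
            if_neg hk2, if_pos rfl, zero_add]
          push_cast; ring
        · rw [if_neg (fun hh => hk2 hh.1), if_neg (fun hh => hkn (by omega)),
            if_neg hk2, if_neg hkn, add_zero]
    · simp only [Finset.mem_range, not_lt] at h2
      have hNn : (N:ℝ) = (n:ℝ)+1 := by
        have : N = n+1 := by omega
        rw [this]; push_cast; ring
      rw [hNn, sub_self, mul_zero]
  rw [hA, hB, hC, hD] at h
  rw [show vSeq N μ (n+1) = μ (1,n+1) from if_pos h1]
  linear_combination h
end

/-- **Three-term recurrence relations for the quasi-stationary distribution**
(Proposition `prop:recurrence`). -/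
theorem three_term_recurrence
    (lam alpha : ℝ) (hlam : 0 < lam) (halpha : 0 < alpha)
    (N : ℕ) (hN : 1 ≤ N)
    (μ : ℕ × ℕ → ℝ) (hpos : ∀ x ∈ starStates N, 0 < μ x)
    (hbal : IsBalanced lam alpha N μ) :
    ∀ n ≤ N,
      (vSeq N μ n = (1 + lam) * aSeq lam alpha N μ n - aSeq lam alpha N μ (n + 1)) ∧
      (aSeq lam alpha N μ (n + 1) =
        lam * ((N : ℝ) - n) * vSeq N μ n - ((n : ℝ) + 1) * vSeq N μ (n + 1)) ∧
      (((n : ℝ) + 1) * aSeq lam alpha N μ (n + 2)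
        - ((n : ℝ) + 2 + lam * ((N : ℝ) + 1)) * aSeq lam alpha N μ (n + 1)
        + lam * (1 + lam) * ((N : ℝ) - n) * aSeq lam alpha N μ n = 0) ∧
      (((n : ℝ) + 2) * vSeq N μ (n + 2)
        - ((n : ℝ) + 2 + lam * N) * vSeq N μ (n + 1)
        + lam * (1 + lam) * ((N : ℝ) - n) * vSeq N μ n = 0) := by
  have hlam1 : (1:ℝ) + lam ≠ 0 := by positivity
  have hu_gt : ∀ m, N < m → uSeq N μ m = 0 := fun m hm => if_neg (by omega)
  have hv_gt : ∀ m, N < m → vSeq N μ m = 0 := fun m hm => if_neg (by omega)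
  have ha_succ : ∀ m : ℕ, aSeq lam alpha N μ (m+1) = ((m:ℝ)+1) * uSeq N μ (m+1) := by
    intro m
    rw [aSeq, if_neg (by omega)]
    push_cast; ring
  have P1 : ∀ n ≤ N, vSeq N μ n
      = (1+lam) * aSeq lam alpha N μ n - aSeq lam alpha N μ (n+1) := by
    intro n hn
    cases n with
    | zero =>
      have h0 := bal0_zero hN hbal
      rw [ha_succ 0, aSeq, if_pos rfl,
        show (1+lam) * (alpha/(1+lam) * uSeq N μ 0) = alpha * uSeq N μ 0 by field_simp]
      push_cast
      linear_combination h0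
    | succ m =>
      have hb := bal0_succ m hn hbal
      rw [ha_succ m, ha_succ (m+1)]
      push_cast
      linear_combination hb
  have P2 : ∀ n ≤ N, aSeq lam alpha N μ (n+1)
      = lam * ((N:ℝ) - n) * vSeq N μ n - ((n:ℝ)+1) * vSeq N μ (n+1) := by
    intro n
    induction n with
    | zero =>
      intro h0
      have hb := bal1_zero hN hbal
      have h1 := P1 0 (Nat.zero_le N)
      rw [aSeq, if_pos rfl] at h1
      rw [show (1+lam) * (alpha/(1+lam) * uSeq N μ 0) - aSeq lam alpha N μ (0+1)
          = alpha * uSeq N μ 0 - aSeq lam alpha N μ (0+1) by field_simp] at h1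
      push_cast
      linear_combination hb + h1
    | succ m ih =>
      intro h2
      have hm : m ≤ N := by omega
      have him := ih hm
      have hb := bal1_succ m h2 hbal
      have h1 := P1 (m+1) h2
      have ha := ha_succ m
      push_cast
      linear_combination h1 + hb + him + lam * ha
  intro n hn
  refine ⟨P1 n hn, P2 n hn, ?_, ?_⟩
  · by_cases hnN : n = N
    · rw [hnN]
      have haN1 : aSeq lam alpha N μ (N+1) = 0 := by
        rw [ha_succ N, hu_gt (N+1) (by omega), mul_zero]
      have haN2 : aSeq lam alpha N μ (N+2) = 0 := by
        rw [aSeq, if_neg (by omega), hu_gt (N+2) (by omega), mul_zero]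
      rw [haN1, haN2]
      ring
    · have hlt : n+1 ≤ N := by omega
      have h1 := P1 n hn
      have h1' := P1 (n+1) hlt
      have h2 := P2 n hn
      push_cast at h1' ⊢
      linear_combination (-(lam*((N:ℝ) - n))) * h1 + ((n:ℝ)+1) * h1' - h2
  · by_cases hnN : n = N
    · rw [hnN]
      rw [hv_gt (N+2) (by omega), hv_gt (N+1) (by omega)]
      ring
    · have hlt : n+1 ≤ N := by omega
      have h1' := P1 (n+1) hlt
      have h2 := P2 n hn
      have h2' := P2 (n+1) hlt
      push_cast at h1' h2' ⊢
      linear_combination (-1) * h1' + (-(1+lam)) * h2 + h2'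
end

section
/- Let λ > 0 and let 0 ≤ n ≤ N−1 be integers. Then Σ_{j=n}^{N−1} (−1)^{j−n} C(N−1,j) C(j,n) B(1/(1+2λ), j+1) (λ/(1+2λ))^j = ((1+2λ)/λ)·C(N−1,n)·∫₀^{λ/(1+2λ)} u^n (1−u)^{N−n−1} (1 − ((1+2λ)/λ)u)^{−2λ/(1+2λ)} du, where the integral converges since the exponent −2λ/(1+2λ) lies in (−1,0). -/
/-! With `a = 1/(1+2λ)` and `c = λ/(1+2λ)`, write `B(a, j+1) = ∫₀¹ t^(a-1) (1-t)^j dt` and sum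
under the integral. Since `C(M,j) C(j,n) = C(M,n) C(M-n,j-n)`, the alternating sum of the
`C(M,j) C(j,n) x^j` is `C(M,n) x^n (1-x)^(M-n)`, here at `x = c(1-t)`. The substitution
`u = c(1-t)` turns `t^(a-1)` into `(1 - u/c)^(a-1)`, and `a - 1 = -2λ/(1+2λ)`. -/

open Finset

/-- The Euler beta function `B(a,b) = ∫₀¹ t^(a-1) (1-t)^(b-1) dt`. -/
noncomputable def eulerBeta (a b : ℝ) : ℝ :=
  ∫ t in (0 : ℝ)..1, t ^ (a - 1) * (1 - t) ^ (b - 1)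

theorem sum_Icc_neg_one_pow_mul_choose_mul_choose_mul_pow {R : Type*} [CommRing R]
    (M n : ℕ) (x : R) :
    ∑ j ∈ Icc n M, (-1 : R) ^ (j - n) * (M.choose j) * (j.choose n) * x ^ j
      = (M.choose n : R) * (x ^ n * (1 - x) ^ (M - n)) := by
  rcases lt_or_ge M n with hMn | hnM
  · simp [Nat.choose_eq_zero_of_lt hMn, Icc_eq_empty_of_lt hMn]
  rw [sub_eq_add_neg, add_comm, add_pow, mul_sum, mul_sum]
  refine sum_nbij' (· - n) (n + ·) ?_ ?_ ?_ ?_ ?_ <;> simp only [mem_Icc, mem_range]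
  · omega
  · omega
  · omega
  · omega
  · rintro j ⟨hnj, -⟩
    have hchoose : (M.choose j : R) * j.choose n = M.choose n * (M - n).choose (j - n) := by
      rw [← Nat.cast_mul, ← Nat.cast_mul, Nat.choose_mul hnj]
    rw [show x ^ j = x ^ n * x ^ (j - n) by rw [← pow_add, Nat.add_sub_cancel' hnj], neg_pow,
      one_pow, mul_one]
    linear_combination ((-1 : R) ^ (j - n) * x ^ n * x ^ (j - n)) * hchoose

theorem eulerBeta_natCast_add_one (a : ℝ) (j : ℕ) :
    eulerBeta a (j + 1) = ∫ t in (0 : ℝ)..1, t ^ (a - 1) * (1 - t) ^ j := by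
  simp only [eulerBeta, add_sub_cancel_right, Real.rpow_natCast]

theorem intervalIntegrable_rpow_mul_one_sub_pow {a : ℝ} (ha : 0 < a) (j : ℕ) :
    IntervalIntegrable (fun t : ℝ => t ^ (a - 1) * (1 - t) ^ j) MeasureTheory.volume 0 1 :=
  (intervalIntegral.intervalIntegrable_rpow' (by linarith)).mul_continuousOn
    (by fun_prop)

theorem sum_mul_eulerBeta_natCast_add_one {a : ℝ} (ha : 0 < a) (s : Finset ℕ) (b : ℕ → ℝ) :
    ∑ j ∈ s, b j * eulerBeta a (j + 1)
      = ∫ t in (0 : ℝ)..1, t ^ (a - 1) * ∑ j ∈ s, b j * (1 - t) ^ j := by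
  calc ∑ j ∈ s, b j * eulerBeta a (j + 1)
      = ∑ j ∈ s, ∫ t in (0 : ℝ)..1, b j * (t ^ (a - 1) * (1 - t) ^ j) := by
        simp only [eulerBeta_natCast_add_one, intervalIntegral.integral_const_mul]
    _ = ∫ t in (0 : ℝ)..1, ∑ j ∈ s, b j * (t ^ (a - 1) * (1 - t) ^ j) :=
        (intervalIntegral.integral_finsetSum
          fun j _ => (intervalIntegrable_rpow_mul_one_sub_pow ha j).const_mul (b j)).symm
    _ = _ := intervalIntegral.integral_congr fun t _ => by
        rw [mul_sum]
        exact sum_congr rfl fun j _ => by ring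

theorem integral_mul_one_sub_inv_mul_rpow {c : ℝ} (hc : c ≠ 0) (f : ℝ → ℝ) (a : ℝ) :
    ∫ u in (0 : ℝ)..c, f u * (1 - c⁻¹ * u) ^ (a - 1)
      = c * ∫ t in (0 : ℝ)..1, t ^ (a - 1) * f (c * (1 - t)) := by
  have hsub := intervalIntegral.integral_comp_sub_mul
    (fun u => f u * (1 - c⁻¹ * u) ^ (a - 1)) hc c (a := 0) (b := 1)
  rw [mul_one, mul_zero, sub_self, sub_zero] at hsub
  calc _ = c * c⁻¹ • ∫ u in (0 : ℝ)..c, f u * (1 - c⁻¹ * u) ^ (a - 1) := by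
        rw [smul_eq_mul, mul_inv_cancel_left₀ hc]
    _ = _ := by
        rw [← hsub]
        refine congrArg (c * ·) (intervalIntegral.integral_congr fun t _ => ?_)
        rw [mul_sub, inv_mul_cancel₀ hc, inv_mul_cancel_left₀ hc, sub_sub_cancel, mul_one_sub,
          mul_comm]

theorem beta_sum_integral_representation_general
    (lam : ℝ) (hlam : 0 < lam) (N n : ℕ) :
    ∑ j ∈ Finset.Icc n (N - 1), (-1 : ℝ) ^ (j - n) * ((N - 1).choose j) * (j.choose n) *
        eulerBeta (1 / (1 + 2 * lam)) ((j : ℝ) + 1) * (lam / (1 + 2 * lam)) ^ j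
      = ((1 + 2 * lam) / lam) * ((N - 1).choose n) *
        ∫ u in (0 : ℝ)..(lam / (1 + 2 * lam)),
          u ^ n * (1 - u) ^ (N - n - 1) *
            (1 - ((1 + 2 * lam) / lam) * u) ^ (-(2 * lam / (1 + 2 * lam))) := by
  set a := 1 / (1 + 2 * lam)
  set c := lam / (1 + 2 * lam)
  have ha : 0 < a := by positivity
  have hc : c ≠ 0 := by positivity
  have hexp : -(2 * lam / (1 + 2 * lam)) = a - 1 := by simp only [a]; field_simp; ring
  have hcinv : (1 + 2 * lam) / lam = c⁻¹ := (inv_div _ _).symm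
  rw [hexp, hcinv, integral_mul_one_sub_inv_mul_rpow hc (fun u => u ^ n * (1 - u) ^ (N - n - 1))]
  calc _ = ∑ j ∈ Icc n (N - 1), (-1 : ℝ) ^ (j - n) * ((N - 1).choose j) * (j.choose n) * c ^ j
        * eulerBeta a (j + 1) := sum_congr rfl fun j _ => by ring
    _ = ∫ t in (0 : ℝ)..1, ((N - 1).choose n : ℝ)
          * (t ^ (a - 1) * ((c * (1 - t)) ^ n * (1 - c * (1 - t)) ^ (N - 1 - n))) := by
        rw [sum_mul_eulerBeta_natCast_add_one ha]
        refine intervalIntegral.integral_congr fun t _ => ?_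
        rw [mul_left_comm, ← sum_Icc_neg_one_pow_mul_choose_mul_choose_mul_pow, mul_sum, mul_sum]
        exact sum_congr rfl fun j _ => by rw [mul_pow]; ring
    _ = _ := by
        rw [intervalIntegral.integral_const_mul, Nat.sub_right_comm]
        field_simp

/-- Transformation of the alternating beta-function sum into an integral
(the Remark after Proposition `prop:recurrence solution`). -/
theorem beta_sum_integral_representation
    (lam : ℝ) (hlam : 0 < lam) (N n : ℕ) (hN : 1 ≤ N) (hn : n ≤ N - 1) :
    ∑ j ∈ Finset.Icc n (N - 1), (-1 : ℝ) ^ (j - n) * ((N - 1).choose j) * (j.choose n) *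
        eulerBeta (1 / (1 + 2 * lam)) ((j : ℝ) + 1) * (lam / (1 + 2 * lam)) ^ j
      = ((1 + 2 * lam) / lam) * ((N - 1).choose n) *
        ∫ u in (0 : ℝ)..(lam / (1 + 2 * lam)),
          u ^ n * (1 - u) ^ (N - n - 1) *
            (1 - ((1 + 2 * lam) / lam) * u) ^ (-(2 * lam / (1 + 2 * lam))) :=
  beta_sum_integral_representation_general lam hlam N n
end

section
/- Let λ > 0, α > 0 and ε > 0 be fixed. For each N, let μ_N be the positive function on H_N satisfying the balance equations of the regenerative contact process, normalized so that μ_N(1,N) = 1, and write v_n = μ_N(1,n). Then there exist C > 0 and N₀ such that for all N ≥ N₀ and all integers n with λN/(1+2λ) + εN ≤ n ≤ N, one has | v_n / v_n^{high} − 1 | ≤ C/N, where v_n^{high} = C(N,n)·λ^{n−N}·f_{N,λ}(n) and f_{N,λ}(n) = Π_{k=n}^{N−1} [1 + 1/((1+2λ)(k+1) − λN)]. -/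
open Finset

/-- The prefactor `f_{N,λ}(n) = ∏_{k=n}^{N-1} (1 + 1/((1+2λ)(k+1) − λN))`. -/
noncomputable def fHigh (lam : ℝ) (N n : ℕ) : ℝ :=
  ∏ k ∈ Finset.Ico n N, (1 + 1 / ((1 + 2 * lam) * ((k : ℝ) + 1) - lam * N))

/-- `v_n^{high} = C(N,n) λ^{n−N} f_{N,λ}(n)`. -/
noncomputable def vHigh (lam : ℝ) (N n : ℕ) : ℝ :=
  (N.choose n : ℝ) * lam ^ ((n : ℤ) - (N : ℤ)) * fHigh lam N n

/-!
Write `v m = μ(1, m)`, `w m = μ(0, m)` and `r m = w m / v m`. Adding the balance equations at the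
two states of level `n + 1` shows, by downward induction, that the flux across the cut between
levels `n` and `n + 1` vanishes: `λ (N - n) v n = (n + 1) (v (n + 1) + w (n + 1))`. Hence
`v n = C(N, n) λ^(n - N) ∏_{n ≤ k < N} (1 + r (k + 1))`, so `μ(1, n) / v_n^{high}` is the product
of the factors `(1 + r m) / (1 + 1 / D m)` with `D m = (1 + 2λ) m - λ N` (`highDenom`).

The balance equation at `(0, m)` together with the cut equation gives the recursion
`(1 + λ) m r m = 1 + λ (N - m) g (r (m + 1))` with `g x = x / (1 + x)`, which `1 / D m` satisfies
up to an error `O(N / D m ^ 2)`. Since `(1 + λ) m = λ (N - m) + D m` and `g` is `1`-Lipschitz, the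
recursion contracts the error, so `|r m - 1 / D m| = O(1 / N²)` wherever `D m ≥ ε N`, by downward
induction from `r N = 1 / D N`. A product of at most `N` factors `1 + O(1 / N²)` is `1 + O(1 / N)`.
-/

lemma abs_div_one_add_sub_div_one_add_le {a b : ℝ} (ha : 0 ≤ a) (hb : 0 ≤ b) :
    |a / (1 + a) - b / (1 + b)| ≤ |a - b| := by
  have h : a / (1 + a) - b / (1 + b) = (a - b) / ((1 + a) * (1 + b)) := by
    field_simp
    ring
  rw [h, abs_div, abs_of_pos (by positivity : 0 < (1 + a) * (1 + b))]
  exact div_le_self (abs_nonneg _) (by nlinarith)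

lemma abs_div_one_add_sub_inv_le {r D a : ℝ} (hr : 0 ≤ r) (hD : 0 < D) (ha : 0 ≤ a) :
    |r / (1 + r) - 1 / D| ≤ |r - 1 / (D + a)| + (a + 1) / D ^ 2 := by
  have hs : 1 / (D + a) / (1 + 1 / (D + a)) = 1 / (D + a + 1) := by
    field_simp
  have hgap : 1 / D - 1 / (D + a + 1) = (a + 1) / (D * (D + a + 1)) := by
    field_simp
    ring
  calc |r / (1 + r) - 1 / D|
      ≤ |r / (1 + r) - 1 / (D + a) / (1 + 1 / (D + a))| +
          |1 / (D + a) / (1 + 1 / (D + a)) - 1 / D| := abs_sub_le _ _ _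
    _ ≤ |r - 1 / (D + a)| + (a + 1) / D ^ 2 := by
      refine add_le_add (abs_div_one_add_sub_div_one_add_le hr (by positivity)) ?_
      rw [hs, abs_sub_comm, hgap, abs_of_nonneg (by positivity)]
      exact div_le_div_of_nonneg_left (by positivity) (by positivity) (by nlinarith)

lemma abs_one_add_div_one_add_sub_one_le {r s : ℝ} (hs : 0 ≤ s) :
    |(1 + r) / (1 + s) - 1| ≤ |r - s| := by
  have h : (1 + r) / (1 + s) - 1 = (r - s) / (1 + s) := by
    field_simp
    ring
  rw [h, abs_div, abs_of_pos (by positivity : 0 < 1 + s)]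
  exact div_le_self (abs_nonneg _) (by linarith)

lemma abs_prod_sub_one_le {ι : Type*} (s : Finset ι) (y : ι → ℝ) {δ : ℝ}
    (hy : ∀ i ∈ s, |y i - 1| ≤ δ) (hδ : #s * δ ≤ 1) :
    |∏ i ∈ s, y i - 1| ≤ 2 * (#s * δ) := by
  have hsum : ∑ i ∈ s, |y i - 1| ≤ #s * δ := by
    simpa using sum_le_card_nsmul s _ δ hy
  have hsum₀ : 0 ≤ ∑ i ∈ s, |y i - 1| := sum_nonneg fun i _ ↦ abs_nonneg _
  calc |∏ i ∈ s, y i - 1| = ‖∏ i ∈ s, (1 + (y i - 1)) - 1‖ := by simp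
    _ ≤ Real.exp (∑ i ∈ s, ‖y i - 1‖) - 1 := s.norm_prod_one_add_sub_one_le _
    _ ≤ |Real.exp (∑ i ∈ s, |y i - 1|) - 1| := le_abs_self _
    _ ≤ 2 * ∑ i ∈ s, |y i - 1| := by
      have h := Real.abs_exp_sub_one_le (x := ∑ i ∈ s, |y i - 1|) (by
        rw [abs_of_nonneg hsum₀]
        linarith)
      rwa [abs_of_nonneg hsum₀] at h
    _ ≤ 2 * (#s * δ) := by linarith

section Rates

variable {lam alpha : ℝ} {N : ℕ}

lemma mem_starStates {b k : ℕ} : (b, k) ∈ starStates N ↔ b ≤ 1 ∧ k ≤ N := by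
  simp only [starStates, mem_product, mem_insert, mem_singleton, mem_range]
  omega

lemma regenRate_zero_zero (k m : ℕ) :
    regenRate lam alpha N (0, k) (0, m) = if k = m + 1 ∧ k ≤ N then (k : ℝ) else 0 := by
  simp [regenRate, starRate]

lemma regenRate_one_zero (k m : ℕ) :
    regenRate lam alpha N (1, k) (0, m) = if m = k ∧ k ≤ N then 1 else 0 := by
  simp [regenRate, starRate]

lemma regenRate_zero_one (k m : ℕ) :
    regenRate lam alpha N (0, k) (1, m) =
      (if k = 0 ∧ m = 0 then alpha else 0) + if m = k ∧ 1 ≤ k ∧ k ≤ N then lam * k else 0 := by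
  simp only [regenRate, starRate, Prod.mk.injEq, true_and, false_and, and_false, zero_ne_one,
    one_ne_zero, if_false]
  split_ifs <;> first | omega | ring

lemma regenRate_one_one (k m : ℕ) :
    regenRate lam alpha N (1, k) (1, m) =
      (if m = k + 1 ∧ k + 1 ≤ N then lam * (N - k) else 0) +
        if k = m + 1 ∧ k ≤ N then (k : ℝ) else 0 := by
  simp only [regenRate, starRate, Prod.mk.injEq, true_and, false_and, and_false, one_ne_zero,
    if_false]
  split_ifs <;> first | omega | ring

end Rates

def highDenom (lam : ℝ) (N m : ℕ) : ℝ := (1 + 2 * lam) * m - lam * N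

lemma highDenom_succ (lam : ℝ) (N m : ℕ) :
    highDenom lam N (m + 1) = highDenom lam N m + (1 + 2 * lam) := by
  unfold highDenom
  push_cast
  ring

lemma one_add_mul_eq_add_highDenom (lam : ℝ) (N m : ℕ) :
    (1 + lam) * m = lam * (N - m) + highDenom lam N m := by
  unfold highDenom
  ring

lemma highDenom_mono {lam : ℝ} (hlam : 0 ≤ lam) (N : ℕ) : Monotone (highDenom lam N) := by
  intro m m' h
  unfold highDenom
  gcongr

lemma le_highDenom_of_window {lam ε : ℝ} {N n : ℕ} (hlam : 0 ≤ lam) (hε : 0 ≤ ε)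
    (h : lam * N / (1 + 2 * lam) + ε * N ≤ n) : ε * N ≤ highDenom lam N n := by
  have h₀ : 0 < 1 + 2 * lam := by linarith
  rw [div_add' _ _ _ h₀.ne', div_le_iff₀ h₀] at h
  unfold highDenom
  nlinarith [mul_nonneg hlam (mul_nonneg hε (Nat.cast_nonneg (α := ℝ) N))]

lemma source_term_le {lam ε D x N : ℝ} (hlam : 0 ≤ lam) (hε : 0 < ε) (hN : 0 < N)
    (hxN : x ≤ N) (hD : ε * N ≤ D) :
    lam * x * ((1 + 2 * lam + 1) / D ^ 2) ≤ D * (2 * lam * (1 + lam) / (ε ^ 3 * N ^ 2)) :=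
  calc lam * x * ((1 + 2 * lam + 1) / D ^ 2)
      ≤ lam * N * ((1 + 2 * lam + 1) / (ε * N) ^ 2) := by gcongr
    _ = ε * N * (2 * lam * (1 + lam) / (ε ^ 3 * N ^ 2)) := by
      field_simp
      ring
    _ ≤ D * (2 * lam * (1 + lam) / (ε ^ 3 * N ^ 2)) := by gcongr

namespace IsBalanced

variable {lam alpha : ℝ} {N : ℕ} {μ : ℕ × ℕ → ℝ}

lemma healthy_balance (hμ : IsBalanced lam alpha N μ) {j : ℕ} (hj : j < N) :
    (if j + 1 < N then ((j : ℝ) + 2) * μ (0, j + 2) else 0) + μ (1, j + 1) =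
      (1 + lam) * (j + 1) * μ (0, j + 1) := by
  have h := hμ (0, j + 1) (mem_starStates.2 ⟨zero_le_one, hj⟩)
  simp only [starStates, sum_product, mem_singleton, zero_ne_one, not_false_eq_true, sum_insert,
    regenRate_zero_zero, ite_and, mul_ite, mul_zero, sum_ite_eq', mem_range, Order.lt_add_one_iff,
    Order.add_one_le_iff, Nat.cast_add, Nat.cast_one, mul_add, mul_one, sum_singleton,
    regenRate_one_zero, sum_ite_eq, hj, ↓reduceIte, Nat.add_right_cancel_iff, and_true, hj.le,
    regenRate_zero_one, Nat.add_eq_zero_iff, one_ne_zero, and_false, false_and,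
    le_add_iff_nonneg_left, zero_le, and_self, zero_add] at h
  rw [show j + 1 + 1 = j + 2 from rfl] at h
  split_ifs at h ⊢ <;> linear_combination h

lemma infected_balance (hμ : IsBalanced lam alpha N μ) {j : ℕ} (hj : j < N) :
    lam * (N - j) * μ (1, j) + (if j + 1 < N then ((j : ℝ) + 2) * μ (1, j + 2) else 0) +
        lam * (j + 1) * μ (0, j + 1) =
      μ (1, j + 1) * ((if j + 1 < N then lam * (N - (j + 1)) else 0) + j + 2) := by
  have h := hμ (1, j + 1) (mem_starStates.2 ⟨le_rfl, hj⟩)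
  simp only [starStates, sum_product, mem_singleton, zero_ne_one, not_false_eq_true, sum_insert,
    regenRate_zero_one, Nat.add_eq_zero_iff, one_ne_zero, and_false, ↓reduceIte, ite_and, zero_add,
    mul_ite, mul_zero, sum_ite_eq, mem_range, Order.lt_add_one_iff, Order.add_one_le_iff, hj,
    le_add_iff_nonneg_left, zero_le, Nat.cast_add, Nat.cast_one, mul_add, mul_one, sum_singleton,
    regenRate_one_one, Nat.add_right_cancel_iff, sum_add_distrib, hj.le, sum_ite_eq',
    regenRate_one_zero, and_true] at h
  rw [show j + 1 + 1 = j + 2 from rfl] at h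
  split_ifs at h ⊢ <;> linear_combination h

lemma cut_balance (hμ : IsBalanced lam alpha N μ) {n : ℕ} (hn : n < N) :
    lam * (N - n) * μ (1, n) = (n + 1) * (μ (1, n + 1) + μ (0, n + 1)) := by
  induction hd : N - (n + 1) generalizing n with
  | zero =>
    have h0 := hμ.healthy_balance hn
    have h1 := hμ.infected_balance hn
    simp only [show ¬ n + 1 < N by omega, if_false] at h0 h1
    linear_combination h1 + h0
  | succ d ih =>
    have h0 := hμ.healthy_balance hn
    have h1 := hμ.infected_balance hn
    have h2 := ih (n := n + 1) (by omega) (by omega)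
    simp only [show n + 1 < N by omega, if_true] at h0 h1
    push_cast at h2
    rw [show n + 1 + 1 = n + 2 from rfl] at h2
    linear_combination h1 + h0 + h2

lemma infected_eq_prod (hμ : IsBalanced lam alpha N μ) (hlam : lam ≠ 0)
    (hpos : ∀ x ∈ starStates N, 0 < μ x) (hnorm : μ (1, N) = 1) {n : ℕ} (hn : n ≤ N) :
    μ (1, n) = N.choose n * lam ^ ((n : ℤ) - N) *
      ∏ k ∈ Ico n N, (1 + μ (0, k + 1) / μ (1, k + 1)) := by
  induction hd : N - n generalizing n with
  | zero =>
    obtain rfl : n = N := by omega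
    simp [hnorm]
  | succ d ih =>
    have hn' : n < N := by omega
    have hv : μ (1, n + 1) ≠ 0 := (hpos _ (mem_starStates.2 ⟨le_rfl, hn'⟩)).ne'
    have hNn : lam * (N - n) ≠ 0 := mul_ne_zero hlam (sub_ne_zero.2 (by norm_cast; omega))
    have hchoose : (N.choose (n + 1) : ℝ) * (n + 1) = N.choose n * (N - n) := by
      have h := congrArg (Nat.cast (R := ℝ)) (Nat.choose_succ_right_eq N n)
      push_cast [Nat.cast_sub hn'.le] at h
      exact h
    have hsplit :
        μ (1, n + 1) + μ (0, n + 1) = μ (1, n + 1) * (1 + μ (0, n + 1) / μ (1, n + 1)) := by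
      field_simp
    refine mul_left_cancel₀ hNn ?_
    rw [hμ.cut_balance hn', hsplit, prod_eq_prod_Ico_succ_bot hn']
    generalize 1 + μ (0, n + 1) / μ (1, n + 1) = r
    rw [ih (n := n + 1) hn' (by omega),
      show ((n + 1 : ℕ) : ℤ) - N = (n - N) + 1 by push_cast; ring, zpow_add_one₀ hlam]
    linear_combination
      (lam * lam ^ ((n : ℤ) - N) * r * ∏ k ∈ Ico (n + 1) N, (1 + μ (0, k + 1) / μ (1, k + 1))) *
        hchoose

lemma infected_div_vHigh_eq_prod (hμ : IsBalanced lam alpha N μ) (hlam : lam ≠ 0)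
    (hpos : ∀ x ∈ starStates N, 0 < μ x) (hnorm : μ (1, N) = 1) {n : ℕ} (hn : n ≤ N) :
    μ (1, n) / vHigh lam N n = ∏ k ∈ Ico n N,
      (1 + μ (0, k + 1) / μ (1, k + 1)) / (1 + 1 / highDenom lam N (k + 1)) := by
  have hc : (N.choose n : ℝ) * lam ^ ((n : ℤ) - N) ≠ 0 :=
    mul_ne_zero (by exact_mod_cast (Nat.choose_pos hn).ne') (zpow_ne_zero _ hlam)
  rw [hμ.infected_eq_prod hlam hpos hnorm hn, vHigh, fHigh, mul_div_mul_left _ _ hc,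
    prod_div_distrib]
  push_cast [highDenom]
  rfl

lemma healthy_div_infected_top (hμ : IsBalanced lam alpha N μ)
    (hpos : ∀ x ∈ starStates N, 0 < μ x) (hD : highDenom lam N N ≠ 0) :
    μ (0, N) / μ (1, N) = 1 / highDenom lam N N := by
  obtain _ | j := N
  · simp [highDenom] at hD
  have h := hμ.healthy_balance (j := j) (by omega)
  have hv := hpos _ (mem_starStates.2 ⟨le_rfl, le_rfl⟩)
  simp only [lt_irrefl, if_false, zero_add] at h
  rw [div_eq_div_iff hv.ne' hD, h, highDenom]
  push_cast
  ring

lemma healthy_div_infected_rec (hμ : IsBalanced lam alpha N μ)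
    (hpos : ∀ x ∈ starStates N, 0 < μ x) {j : ℕ} (hj : j + 1 < N) :
    (1 + lam) * (j + 1) * (μ (0, j + 1) / μ (1, j + 1)) =
      1 + lam * (N - (j + 1)) *
        (μ (0, j + 2) / μ (1, j + 2) / (1 + μ (0, j + 2) / μ (1, j + 2))) := by
  have hv1 := hpos _ (mem_starStates.2 ⟨le_rfl, hj.le⟩)
  have hv2 : 0 < μ (1, j + 2) := hpos _ (mem_starStates.2 ⟨le_rfl, hj⟩)
  have hw2 : 0 < μ (0, j + 2) := hpos _ (mem_starStates.2 ⟨zero_le_one, hj⟩)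
  have h0 := hμ.healthy_balance (j := j) (by omega)
  have hcut := hμ.cut_balance hj
  simp only [hj, if_true] at h0
  push_cast at hcut
  rw [show j + 1 + 1 = j + 2 from rfl] at hcut
  field_simp
  linear_combination -(μ (1, j + 2) + μ (0, j + 2)) * h0 - μ (0, j + 2) * hcut

lemma healthy_div_infected_sub_inv_rec (hμ : IsBalanced lam alpha N μ)
    (hpos : ∀ x ∈ starStates N, 0 < μ x) {j : ℕ} (hj : j + 1 < N)
    (hD : highDenom lam N (j + 1) ≠ 0) :
    (1 + lam) * (j + 1) * (μ (0, j + 1) / μ (1, j + 1) - 1 / highDenom lam N (j + 1)) =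
      lam * (N - (j + 1)) * (μ (0, j + 2) / μ (1, j + 2) / (1 + μ (0, j + 2) / μ (1, j + 2)) -
        1 / highDenom lam N (j + 1)) := by
  have hsplit := one_add_mul_eq_add_highDenom lam N (j + 1)
  push_cast at hsplit
  linear_combination hμ.healthy_div_infected_rec hpos hj - hsplit / highDenom lam N (j + 1) -
    mul_inv_cancel₀ hD

theorem abs_healthy_div_infected_sub_inv_le (hμ : IsBalanced lam alpha N μ) (hlam : 0 ≤ lam)
    (hpos : ∀ x ∈ starStates N, 0 < μ x) {ε : ℝ} (hε : 0 < ε) (hN : 0 < N) {m : ℕ}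
    (hm : m ≤ N) (hD : ε * N ≤ highDenom lam N m) :
    |μ (0, m) / μ (1, m) - 1 / highDenom lam N m| ≤ 2 * lam * (1 + lam) / (ε ^ 3 * N ^ 2) := by
  have hεN : 0 < ε * N := by positivity
  induction hd : N - m generalizing m with
  | zero =>
    obtain rfl : m = N := by omega
    rw [hμ.healthy_div_infected_top hpos (hεN.trans_le hD).ne', sub_self, abs_zero]
    positivity
  | succ d ih =>
    obtain _ | j := m
    · simp only [highDenom, CharP.cast_eq_zero, mul_zero, zero_sub] at hD
      nlinarith
    have hj : j + 1 < N := by omega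
    have hDpos : 0 < highDenom lam N (j + 1) := hεN.trans_le hD
    have hD2 := highDenom_succ lam N (j + 1)
    have ih2 := ih (m := j + 2) hj (by linarith) (by omega)
    rw [hD2] at ih2
    have hr2 : 0 ≤ μ (0, j + 2) / μ (1, j + 2) :=
      div_nonneg (hpos _ (mem_starStates.2 ⟨zero_le_one, hj⟩)).le
        (hpos _ (mem_starStates.2 ⟨le_rfl, hj⟩)).le
    have hNj : (j : ℝ) + 1 ≤ N := by exact_mod_cast hj.le
    have hB : 0 ≤ lam * (N - (j + 1)) := mul_nonneg hlam (by linarith)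
    have hstep := (abs_div_one_add_sub_inv_le hr2 hDpos (by positivity : 0 ≤ 1 + 2 * lam)).trans
      (add_le_add_left ih2 _)
    have hsource := source_term_le (x := N - (j + 1)) hlam hε (Nat.cast_pos.2 hN) (by linarith) hD
    have hA : 0 < (1 + lam) * (j + 1) := by positivity
    refine le_of_mul_le_mul_left ?_ hA
    calc (1 + lam) * (j + 1) * |μ (0, j + 1) / μ (1, j + 1) - 1 / highDenom lam N (j + 1)|
        = lam * (N - (j + 1)) * |μ (0, j + 2) / μ (1, j + 2) /
            (1 + μ (0, j + 2) / μ (1, j + 2)) - 1 / highDenom lam N (j + 1)| := by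
          rw [← abs_of_pos hA, ← abs_mul, hμ.healthy_div_infected_sub_inv_rec hpos hj hDpos.ne',
            abs_mul, abs_of_nonneg hB]
      _ ≤ lam * (N - (j + 1)) * (2 * lam * (1 + lam) / (ε ^ 3 * N ^ 2) +
            (1 + 2 * lam + 1) / highDenom lam N (j + 1) ^ 2) := by gcongr
      _ ≤ (1 + lam) * (j + 1) * (2 * lam * (1 + lam) / (ε ^ 3 * N ^ 2)) := by
          have hsplit := one_add_mul_eq_add_highDenom lam N (j + 1)
          push_cast at hsplit
          rw [hsplit]
          linarith

theorem abs_infected_div_vHigh_sub_one_le (hμ : IsBalanced lam alpha N μ) (hlam : 0 < lam)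
    (hpos : ∀ x ∈ starStates N, 0 < μ x) (hnorm : μ (1, N) = 1) {ε : ℝ} (hε : 0 < ε)
    (hN : 2 * lam * (1 + lam) / ε ^ 3 ≤ N) {n : ℕ} (hn : n ≤ N)
    (hD : ε * N ≤ highDenom lam N n) :
    |μ (1, n) / vHigh lam N n - 1| ≤ 4 * lam * (1 + lam) / (ε ^ 3 * N) := by
  have hN₀ : 0 < N := by
    exact_mod_cast ((by positivity : (0 : ℝ) < 2 * lam * (1 + lam) / ε ^ 3).trans_le hN)
  have hfactor : ∀ k ∈ Ico n N, |(1 + μ (0, k + 1) / μ (1, k + 1)) /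
      (1 + 1 / highDenom lam N (k + 1)) - 1| ≤ 2 * lam * (1 + lam) / (ε ^ 3 * N ^ 2) := by
    intro k hk
    obtain ⟨hnk, hkN⟩ := mem_Ico.1 hk
    have hDk := hD.trans (highDenom_mono hlam.le N (by omega : n ≤ k + 1))
    refine (abs_one_add_div_one_add_sub_one_le ?_).trans
      (hμ.abs_healthy_div_infected_sub_inv_le hlam.le hpos hε hN₀ hkN hDk)
    exact one_div_nonneg.2 ((mul_pos hε (Nat.cast_pos.2 hN₀)).le.trans hDk)
  have hcard : (#(Ico n N) : ℝ) * (2 * lam * (1 + lam) / (ε ^ 3 * N ^ 2)) ≤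
      2 * lam * (1 + lam) / (ε ^ 3 * N) := by
    calc (#(Ico n N) : ℝ) * (2 * lam * (1 + lam) / (ε ^ 3 * N ^ 2))
        ≤ N * (2 * lam * (1 + lam) / (ε ^ 3 * N ^ 2)) := by
          gcongr
          exact_mod_cast (Nat.card_Ico n N).trans_le (Nat.sub_le N n)
      _ = 2 * lam * (1 + lam) / (ε ^ 3 * N) := by
          field_simp
  have hsmall : 2 * lam * (1 + lam) / (ε ^ 3 * N) ≤ 1 := by
    rw [← div_div, div_le_one (by positivity)]
    exact hN
  rw [hμ.infected_div_vHigh_eq_prod hlam.ne' hpos hnorm hn]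
  calc _ ≤ 2 * (#(Ico n N) * (2 * lam * (1 + lam) / (ε ^ 3 * N ^ 2))) :=
        abs_prod_sub_one_le _ _ hfactor (hcard.trans hsmall)
    _ ≤ 2 * (2 * lam * (1 + lam) / (ε ^ 3 * N)) := by gcongr
    _ = 4 * lam * (1 + lam) / (ε ^ 3 * N) := by ring

end IsBalanced

theorem stationary_asymptotic_high_linear_general
    (lam alpha ε : ℝ) (hlam : 0 < lam) (hε : 0 < ε)
    (μ : ℕ → (ℕ × ℕ) → ℝ)
    (hpos : ∀ N : ℕ, ∀ x ∈ starStates N, 0 < μ N x)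
    (hbal : ∀ N : ℕ, IsBalanced lam alpha N (μ N))
    (hnorm : ∀ N : ℕ, μ N (1, N) = 1) :
    ∃ C > (0 : ℝ), ∃ N₀ : ℕ, ∀ N ≥ N₀, ∀ n : ℕ, n ≤ N →
      lam * N / (1 + 2 * lam) + ε * N ≤ (n : ℝ) →
      |μ N (1, n) / vHigh lam N n - 1| ≤ C / N := by
  refine ⟨4 * lam * (1 + lam) / ε ^ 3, by positivity, ⌈2 * lam * (1 + lam) / ε ^ 3⌉₊, ?_⟩
  intro N hN n hn hwin
  rw [div_div]
  exact (hbal N).abs_infected_div_vHigh_sub_one_le hlam (hpos N) (hnorm N) hε (Nat.ceil_le.1 hN) hn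
    (le_highDenom_of_window hlam.le hε.le hwin)

/-- **Asymptotics of the quasi-stationary measure in the high infection regime,
linear window** (Theorem `thm:stationary asymptotic high` (1)). -/
theorem stationary_asymptotic_high_linear
    (lam alpha ε : ℝ) (hlam : 0 < lam) (halpha : 0 < alpha) (hε : 0 < ε)
    (μ : ℕ → (ℕ × ℕ) → ℝ)
    (hpos : ∀ N : ℕ, ∀ x ∈ starStates N, 0 < μ N x)
    (hbal : ∀ N : ℕ, IsBalanced lam alpha N (μ N))
    (hnorm : ∀ N : ℕ, μ N (1, N) = 1) :
    ∃ C > (0 : ℝ), ∃ N₀ : ℕ, ∀ N ≥ N₀, ∀ n : ℕ, n ≤ N →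
      lam * N / (1 + 2 * lam) + ε * N ≤ (n : ℝ) →
      |μ N (1, n) / vHigh lam N n - 1| ≤ C / N :=
  stationary_asymptotic_high_linear_general lam alpha ε hlam hε μ hpos hbal hnorm
end

section
/- Let λ > 0 be fixed. For each integer N ≥ 2, let (π_n)_{0≤n≤N} be the sequence satisfying π_1 = λN·π_0, Σ_{n=0}^N π_n = 1, and (n+2)π_{n+2} − (n+2+λN)π_{n+1} + λ(1+λ)(N−n)π_n = 0 for 1 ≤ n ≤ N−1 (with π_{N+1} = 0), and set b = 2π_2 − λN(λN+1−λ)π_0. Then π_0 ≠ 0 for all large N, and there exist C > 0 and N₀ such that for all N ≥ N₀, | b/π_0 + λ²N² − λ(1+3λ)N | ≤ C. -/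
open Finset

private lemma choose_id (N k : ℕ) (hk : k ≤ N) :
    (N.choose (k+1) : ℝ) * ((k:ℝ)+1) = (N.choose k : ℝ) * ((N:ℝ) - (k:ℝ)) := by
  have h := Nat.choose_succ_right_eq N k
  have h' : ((N.choose (k+1) * (k+1) : ℕ) : ℝ) = ((N.choose k * (N - k) : ℕ) : ℝ) := by
    rw [h]
  push_cast [Nat.cast_sub hk] at h'
  linarith

/-- The downward chain: `0 ≤ p (n+1)` and `(n+2) p (n+2) ≤ λ (N-(n+1)) p (n+1)`. -/
private lemma chain (lam : ℝ) (hlam : 0 < lam) (N : ℕ) (hN : 2 ≤ N)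
    (p : ℕ → ℝ) (htop : p (N+1) = 0)
    (hrec : ∀ n : ℕ, 1 ≤ n → n ≤ N - 1 →
      ((n : ℝ) + 2) * p (n + 2) - ((n : ℝ) + 2 + lam * N) * p (n + 1)
        + lam * (1 + lam) * ((N : ℝ) - n) * p n = 0)
    (hpN : 0 ≤ p N) :
    ∀ n, n ≤ N - 1 →
      0 ≤ p (n+1) ∧ ((n:ℝ)+2) * p (n+2) ≤ lam * ((N:ℝ) - ((n:ℝ)+1)) * p (n+1) := by
  have hl1 : (0:ℝ) < 1 + lam := by linarith
  have key : ∀ k n, n ≤ N - 1 → N - 1 - n = k →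
      0 ≤ p (n+1) ∧ ((n:ℝ)+2) * p (n+2) ≤ lam * ((N:ℝ) - ((n:ℝ)+1)) * p (n+1) := by
    intro k
    induction k with
    | zero =>
      intro n hn hk
      have e1 : n + 1 = N := by omega
      have e2 : n + 2 = N + 1 := by omega
      have ecast : (n:ℝ) = (N:ℝ) - 1 := by
        have h := congrArg (Nat.cast (R := ℝ)) e1; push_cast at h; linarith
      refine ⟨by rw [e1]; exact hpN, ?_⟩
      rw [e2, htop, ecast]
      have h1 : lam * ((N:ℝ) - ((N:ℝ) - 1 + 1)) * p (n+1) = 0 := by ring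
      have h2 : ((N:ℝ) - 1 + 2) * 0 = 0 := by ring
      rw [h1, h2]
    | succ k ih =>
      intro n hn hk
      have hn2 : n + 1 ≤ N - 1 := by omega
      obtain ⟨hp2, hb⟩ := ih (n+1) hn2 (by omega)
      have hr := hrec (n+1) (by omega) hn2
      simp only [show n+1+1 = n+2 from rfl, show n+1+2 = n+3 from rfl] at hb hr hp2
      push_cast at hb hr
      have hNm : ((n:ℝ)+1) + 1 ≤ (N:ℝ) := by exact_mod_cast (show n + 2 ≤ N by omega)
      have e1 : lam*(1+lam)*((N:ℝ)-((n:ℝ)+1)) * p (n+1)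
          = (((n:ℝ)+3) + lam*((n:ℝ)+2)) * p (n+2)
            + (lam * ((N:ℝ) - ((n:ℝ)+2)) * p (n+2) - (((n:ℝ)+3)) * p (n+3)) := by
        linear_combination hr
      have hT : 0 ≤ lam * ((N:ℝ) - ((n:ℝ)+2)) * p (n+2) - ((n:ℝ)+3) * p (n+3) := by
        linarith
      have hcoef : (0:ℝ) < ((n:ℝ)+3) + lam*((n:ℝ)+2) := by positivity
      have hpos : 0 ≤ lam*(1+lam)*((N:ℝ)-((n:ℝ)+1)) * p (n+1) := by
        nlinarith [mul_nonneg hcoef.le hp2]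
      have hc : (0:ℝ) < lam*(1+lam)*((N:ℝ)-((n:ℝ)+1)) := by
        have h : (0:ℝ) < (N:ℝ)-((n:ℝ)+1) := by linarith
        positivity
      have hp1 : 0 ≤ p (n+1) := by
        rcases le_or_gt 0 (p (n+1)) with h | h
        · exact h
        · exact absurd hpos (by nlinarith [mul_neg_of_pos_of_neg hc h])
      refine ⟨hp1, ?_⟩
      have h5 : lam*(1+lam)*((N:ℝ)-((n:ℝ)+1)) * p (n+1)
          ≥ (1+lam)*(((n:ℝ)+2) * p (n+2)) := by nlinarith [e1, hT, hp2]
      have h6 : (1+lam)*(((n:ℝ)+2) * p (n+2))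
          ≤ (1+lam)*(lam * ((N:ℝ) - ((n:ℝ)+1)) * p (n+1)) := by nlinarith [h5]
      exact le_of_mul_le_mul_left h6 hl1
  intro n hn
  exact key (N-1-n) n hn rfl

private lemma strictpos (lam : ℝ) (hlam : 0 < lam) (N : ℕ) (hN : 2 ≤ N)
    (p : ℕ → ℝ) (htop : p (N+1) = 0)
    (hrec : ∀ n : ℕ, 1 ≤ n → n ≤ N - 1 →
      ((n : ℝ) + 2) * p (n + 2) - ((n : ℝ) + 2 + lam * N) * p (n + 1)
        + lam * (1 + lam) * ((N : ℝ) - n) * p n = 0)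
    (hpN : 0 < p N) :
    ∀ n, 1 ≤ n → n ≤ N → 0 < p n := by
  have hQ := chain lam hlam N hN p htop hrec hpN.le
  have key : ∀ k n, 1 ≤ n → n ≤ N → N - n = k → 0 < p n := by
    intro k
    induction k with
    | zero =>
      intro n h1 h2 hk
      have : n = N := by omega
      rwa [this]
    | succ k ih =>
      intro n h1 h2 hk
      have hn1 : n ≤ N - 1 := by omega
      have hpn1 : 0 < p (n+1) := ih (n+1) (by omega) (by omega) (by omega)
      obtain ⟨-, hb⟩ := hQ n hn1
      have hr := hrec n h1 hn1
      have hNm : (n:ℝ) + 1 ≤ (N:ℝ) := by exact_mod_cast (show n+1 ≤ N by omega)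
      have hc : (0:ℝ) < lam*(1+lam)*((N:ℝ)-(n:ℝ)) := by
        have h : (0:ℝ) < (N:ℝ)-(n:ℝ) := by linarith
        positivity
      have hcoef : (0:ℝ) < (n:ℝ)+2+lam*((n:ℝ)+1) := by positivity
      have hpos : 0 < lam*(1+lam)*((N:ℝ)-(n:ℝ)) * p n := by
        nlinarith [mul_pos hcoef hpn1, hb, hr]
      rcases lt_or_ge 0 (p n) with h | h
      · exact h
      · exact absurd hpos (by nlinarith [mul_nonneg hc.le (neg_nonneg.mpr h)])
  intro n h1 h2
  exact key (N - n) n h1 h2 rfl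

private lemma Slem (lam : ℝ) (hlam : 0 < lam) (N nj : ℕ) (hnjN : nj + 1 ≤ N)
    (hmin : ∀ m : ℕ, 2 ≤ m → m < nj → (1+lam)*((m:ℝ)+1) < lam*((N:ℝ)-(m:ℝ)))
    (B : ℝ) (hB : 2*B*(1+lam)^3 = lam^2*(N.choose 3 : ℝ)) :
    ∀ n, 2 ≤ n → n + 1 ≤ nj → 2*B*(1+lam)^(n+1) ≤ lam^n*(N.choose (n+1) : ℝ) := by
  have hl1 : (0:ℝ) < 1 + lam := by linarith
  intro n hn
  induction n, hn using Nat.le_induction with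
  | base =>
    intro _
    exact le_of_eq hB
  | succ n hn ih =>
    intro hsucc
    have I := ih (by omega)
    have hm := hmin (n+1) (by omega) (by omega)
    push_cast at hm
    have hid := choose_id N (n+1) (by omega)
    simp only [show n+1+1 = n+2 from rfl] at hid
    push_cast at hid
    have hid' : lam^(n+1) * ((N.choose (n+2):ℝ) * ((n:ℝ)+1+1))
        = lam^(n+1) * ((N.choose (n+1):ℝ) * ((N:ℝ)-((n:ℝ)+1))) := by rw [hid]
    have h1 : lam^n*(N.choose (n+1):ℝ)*((1+lam)*((n:ℝ)+2))
        ≤ lam^n*(N.choose (n+1):ℝ)*(lam*((N:ℝ)-((n:ℝ)+1))) := by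
      apply mul_le_mul_of_nonneg_left (by nlinarith [hm]) (by positivity)
    have h2 : 2*B*(1+lam)^(n+1)*((1+lam)*((n:ℝ)+2))
        ≤ lam^n*(N.choose (n+1):ℝ)*((1+lam)*((n:ℝ)+2)) := by
      apply mul_le_mul_of_nonneg_right I (by positivity)
    have h5 : 2*B*(1+lam)^(n+2)*((n:ℝ)+2) ≤ lam^(n+1)*(N.choose (n+2):ℝ)*((n:ℝ)+2) := by
      simp only [pow_succ] at h1 h2 hid' ⊢
      nlinarith [h1, h2, hid']
    exact le_of_mul_le_mul_right h5 (by positivity)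

set_option maxHeartbeats 1600000 in
private lemma lowchain (lam : ℝ) (hlam : 0 < lam) (N : ℕ) (hN : 2 ≤ N)
    (p : ℕ → ℝ) (htop : p (N+1) = 0)
    (hrec : ∀ n : ℕ, 1 ≤ n → n ≤ N - 1 →
      ((n : ℝ) + 2) * p (n + 2) - ((n : ℝ) + 2 + lam * N) * p (n + 1)
        + lam * (1 + lam) * ((N : ℝ) - n) * p n = 0)
    (hpN : 0 ≤ p N)
    (nj : ℕ) (hnj3 : 3 ≤ nj) (hnjN : nj + 1 ≤ N)
    (hP : lam * ((N:ℝ) - (nj:ℝ)) ≤ (1+lam) * ((nj:ℝ)+1))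
    (hmin : ∀ m : ℕ, 2 ≤ m → m < nj → (1+lam)*((m:ℝ)+1) < lam*((N:ℝ)-(m:ℝ)))
    (B : ℝ) (hBpos : 0 ≤ B) (hB : 2*B*(1+lam)^3 = lam^2*(N.choose 3 : ℝ)) :
    ∀ n, 2 ≤ n → n ≤ nj →
      p (n+1) * (lam^n*(N.choose n : ℝ) + B*(1+lam)^n)
        ≤ p n * (lam^(n+1)*(N.choose (n+1) : ℝ) + B*(1+lam)^(n+1)) := by
  have hl1 : (0:ℝ) < 1 + lam := by linarith
  have hQ := chain lam hlam N hN p htop hrec hpN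
  have hS := Slem lam hlam N nj hnjN hmin B hB
  have key : ∀ k n, 2 ≤ n → n ≤ nj → nj - n = k →
      p (n+1) * (lam^n*(N.choose n : ℝ) + B*(1+lam)^n)
        ≤ p n * (lam^(n+1)*(N.choose (n+1) : ℝ) + B*(1+lam)^(n+1)) := by
    intro k
    induction k with
    | zero =>
      intro n h2 hnnj hk
      have hnn : n = nj := by omega
      subst hnn
      -- chain at nj - 1
      obtain ⟨J, rfl⟩ : ∃ J, n = J + 3 := ⟨n - 3, by omega⟩
      obtain ⟨hq1, hq2⟩ := hQ (J+2) (by omega)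
      simp only [show J+2+1 = J+3 from rfl, show J+2+2 = J+4 from rfl] at hq1 hq2
      push_cast at hq2
      -- mediant inequality
      have hidm := choose_id N (J+3) (by omega)
      simp only [show J+3+1 = J+4 from rfl] at hidm
      push_cast at hidm hP
      have hidm' : lam^(J+4) * ((N.choose (J+4):ℝ) * ((J:ℝ)+3+1))
          = lam^(J+4) * ((N.choose (J+3):ℝ) * ((N:ℝ)-((J:ℝ)+3))) := by rw [hidm]
      have hPm' : B*(1+lam)^(J+3) * (lam*((N:ℝ)-((J:ℝ)+3)))
          ≤ B*(1+lam)^(J+3) * ((1+lam)*((J:ℝ)+3+1)) :=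
        mul_le_mul_of_nonneg_left hP (by positivity)
      have hmed : lam*((N:ℝ)-((J:ℝ)+3)) * (lam^(J+3)*(N.choose (J+3):ℝ) + B*(1+lam)^(J+3))
          ≤ ((J:ℝ)+4) * (lam^(J+4)*(N.choose (J+4):ℝ) + B*(1+lam)^(J+4)) := by
        simp only [pow_succ] at hidm' hPm' ⊢
        nlinarith [hidm', hPm']
      have hYpos : (0:ℝ) ≤ lam^(J+3)*(N.choose (J+3):ℝ) + B*(1+lam)^(J+3) := by positivity
      have hA : ((J:ℝ)+4) * (p (J+4) * (lam^(J+3)*(N.choose (J+3):ℝ) + B*(1+lam)^(J+3)))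
          ≤ ((J:ℝ)+4) * (p (J+3) * (lam^(J+4)*(N.choose (J+4):ℝ) + B*(1+lam)^(J+4))) := by
        have s1 := mul_le_mul_of_nonneg_right hq2 hYpos
        have s2 := mul_le_mul_of_nonneg_left hmed hq1
        nlinarith [s1, s2]
      exact le_of_mul_le_mul_left hA (by positivity)
    | succ k ih =>
      intro n h2 hnnj hk
      have ihn := ih (n+1) (by omega) (by omega) (by omega)
      simp only [show n+1+1 = n+2 from rfl] at ihn
      have hnN1 : n ≤ N - 1 := by omega
      have hr := hrec n (by omega) hnN1
      obtain ⟨hq1, -⟩ := hQ n hnN1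
      have hSn := hS n h2 (by omega)
      -- the supersolution inequality L[Y](n) ≤ 0
      have hidA := choose_id N n (by omega)
      have hidB := choose_id N (n+1) (by omega)
      simp only [show n+1+1 = n+2 from rfl] at hidB
      push_cast at hidA hidB
      have hE : ((n:ℝ)+2) * (lam^(n+2)*(N.choose (n+2):ℝ) + B*(1+lam)^(n+2))
            - ((n:ℝ)+2+lam*N) * (lam^(n+1)*(N.choose (n+1):ℝ) + B*(1+lam)^(n+1))
            + lam*(1+lam)*((N:ℝ)-(n:ℝ)) * (lam^n*(N.choose n:ℝ) + B*(1+lam)^n)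
          = -(lam^(n+1)*(N.choose (n+1):ℝ)) + 2*lam*B*(1+lam)^(n+1) := by
        linear_combination (lam^(n+2)) * hidB - (lam^(n+1)*(1+lam)) * hidA
      have hSn' := mul_le_mul_of_nonneg_left hSn hlam.le
      have hLY : ((n:ℝ)+2) * (lam^(n+2)*(N.choose (n+2):ℝ) + B*(1+lam)^(n+2))
          ≤ ((n:ℝ)+2+lam*N) * (lam^(n+1)*(N.choose (n+1):ℝ) + B*(1+lam)^(n+1))
            - lam*(1+lam)*((N:ℝ)-(n:ℝ)) * (lam^n*(N.choose n:ℝ) + B*(1+lam)^n) := by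
        simp only [pow_succ] at hE hSn' ⊢
        nlinarith [hE, hSn']
      -- main step
      have e1 : lam*(1+lam)*((N:ℝ)-(n:ℝ)) * (p n * (lam^(n+1)*(N.choose (n+1):ℝ) + B*(1+lam)^(n+1)))
          = (((n:ℝ)+2+lam*N)*p (n+1) - ((n:ℝ)+2)*p (n+2))
            * (lam^(n+1)*(N.choose (n+1):ℝ) + B*(1+lam)^(n+1)) := by
        linear_combination (lam^(n+1)*(N.choose (n+1):ℝ) + B*(1+lam)^(n+1)) * hr
      have h1 := mul_le_mul_of_nonneg_left ihn (show (0:ℝ) ≤ (n:ℝ)+2 by positivity)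
      have h2' := mul_le_mul_of_nonneg_left hLY hq1
      have hNm : (n:ℝ) + 1 ≤ (N:ℝ) := by exact_mod_cast (show n+1 ≤ N by omega)
      have hc : (0:ℝ) < lam*(1+lam)*((N:ℝ)-(n:ℝ)) := by
        have h : (0:ℝ) < (N:ℝ)-(n:ℝ) := by linarith
        positivity
      have hA : (lam*(1+lam)*((N:ℝ)-(n:ℝ)))
            * (p (n+1) * (lam^n*(N.choose n : ℝ) + B*(1+lam)^n))
          ≤ (lam*(1+lam)*((N:ℝ)-(n:ℝ)))
            * (p n * (lam^(n+1)*(N.choose (n+1) : ℝ) + B*(1+lam)^(n+1))) := by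
        simp only [pow_succ] at e1 h1 h2' ⊢
        nlinarith [e1, h1, h2']
      exact le_of_mul_le_mul_left hA hc
  intro n h2 hnnj
  exact key (nj - n) n h2 hnnj rfl

set_option maxHeartbeats 12000000 in
/-- **Asymptotics of `b/π₀`** (equation `eq:b over pi0` in the proof of Proposition
`prop:vn initial value`): for the quasi-stationary sequence `(π_n)` one has
`b/π₀ = −λ²N² + λ(1+3λ)N + O(1)`, where `b = 2π₂ − λN(λN+1−λ)π₀`. -/
theorem b_over_pi0_asymptotics
    (lam : ℝ) (hlam : 0 < lam)
    (pi : ℕ → ℕ → ℝ)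
    (hpi1 : ∀ N : ℕ, 2 ≤ N → pi N 1 = lam * N * pi N 0)
    (hsum : ∀ N : ℕ, 2 ≤ N → ∑ n ∈ Finset.range (N + 1), pi N n = 1)
    (htop : ∀ N : ℕ, 2 ≤ N → pi N (N + 1) = 0)
    (hrec : ∀ N : ℕ, 2 ≤ N → ∀ n : ℕ, 1 ≤ n → n ≤ N - 1 →
      ((n : ℝ) + 2) * pi N (n + 2) - ((n : ℝ) + 2 + lam * N) * pi N (n + 1)
        + lam * (1 + lam) * ((N : ℝ) - n) * pi N n = 0) :
    (∃ N₁ : ℕ, ∀ N ≥ N₁, pi N 0 ≠ 0) ∧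
    (∃ C > (0 : ℝ), ∃ N₀ : ℕ, ∀ N ≥ N₀,
      |(2 * pi N 2 - lam * N * (lam * N + 1 - lam) * pi N 0) / pi N 0
        + lam ^ 2 * (N : ℝ) ^ 2 - lam * (1 + 3 * lam) * N| ≤ C) := by
  have hl1 : (0:ℝ) < 1 + lam := by linarith
  -- positivity of the whole sequence, for any N ≥ 2
  have main_pos : ∀ N : ℕ, 2 ≤ N →
      (0 < pi N 0 ∧ ∀ n, 1 ≤ n → n ≤ N → 0 < pi N n) := by
    intro N hN2
    have hrecN := hrec N hN2
    have htopN := htop N hN2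
    have hNR : (0:ℝ) < (N:ℝ) := by exact_mod_cast (show 0 < N by omega)
    have hlamN : (0:ℝ) < lam * N := by positivity
    have hNpos : 0 < pi N N := by
      by_contra h
      push_neg at h
      have hrecneg : ∀ n : ℕ, 1 ≤ n → n ≤ N - 1 →
          ((n : ℝ) + 2) * (-pi N (n + 2)) - ((n : ℝ) + 2 + lam * N) * (-pi N (n + 1))
            + lam * (1 + lam) * ((N : ℝ) - n) * (-pi N n) = 0 := by
        intro n h1 h2; linear_combination -(hrecN n h1 h2)
      have hQ := chain lam hlam N hN2 (fun m => -pi N m)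
        (by simpa using htopN) hrecneg (by simpa using h)
      have hle : ∀ m, m ≤ N → pi N m ≤ 0 := by
        intro m hm
        rcases Nat.eq_zero_or_pos m with rfl | hm1
        · have h1 : 0 ≤ -pi N 1 := (hQ 0 (by omega)).1
          have he := hpi1 N hN2
          rcases le_or_gt (pi N 0) 0 with h' | h'
          · exact h'
          · nlinarith [mul_pos hlamN h']
        · obtain ⟨m', rfl⟩ : ∃ m', m = m' + 1 := ⟨m - 1, by omega⟩
          have := (hQ m' (by omega)).1
          simpa using this
      have hsumN := hsum N hN2
      have hs : (∑ n ∈ Finset.range (N+1), pi N n) ≤ 0 :=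
        Finset.sum_nonpos (fun i hi => hle i (Nat.lt_succ_iff.mp (Finset.mem_range.mp hi)))
      linarith
    have hall := strictpos lam hlam N hN2 (pi N) htopN hrecN hNpos
    have h0 : 0 < pi N 0 := by
      have h1 := hall 1 le_rfl (by omega)
      have he := hpi1 N hN2
      rcases lt_or_ge 0 (pi N 0) with h' | h'
      · exact h'
      · nlinarith [mul_nonneg hlamN.le (neg_nonneg.mpr h')]
    exact ⟨h0, hall⟩
  constructor
  · exact ⟨2, fun N hN => (main_pos N hN).1.ne'⟩
  -- the quantitative part
  obtain ⟨K2, hK2⟩ : ∃ x : ℝ, x = (1+lam)*(1+2*lam) := ⟨_, rfl⟩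
  obtain ⟨M0, hM0⟩ : ∃ x : ℝ, x = 6*(1+lam)*(1+2*lam) + 10*(1+lam) + 10 := ⟨_, rfl⟩
  obtain ⟨C, hC⟩ : ∃ x : ℝ, x = 12*(1+lam)^2*(1+2*lam) + 2*(1+lam)*(3+lam) := ⟨_, rfl⟩
  have hCpos : 0 < C := by rw [hC]; positivity
  refine ⟨C, hCpos, ⌈M0/lam⌉₊ + 2, ?_⟩
  intro N hN
  have hN2 : 2 ≤ N := le_trans (Nat.le_add_left 2 _) hN
  have hMle : M0 ≤ lam * N := by
    have h1 : (⌈M0/lam⌉₊ : ℝ) ≤ (N:ℝ) := by exact_mod_cast (show ⌈M0/lam⌉₊ ≤ N by omega)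
    have h2 : M0/lam ≤ ⌈M0/lam⌉₊ := Nat.le_ceil _
    have h3 : M0/lam ≤ (N:ℝ) := le_trans h2 h1
    calc M0 = (M0/lam) * lam := by field_simp
    _ ≤ (N:ℝ) * lam := mul_le_mul_of_nonneg_right h3 hlam.le
    _ = lam * N := by ring
  have hN28 : (28:ℝ) ≤ (N:ℝ) := by nlinarith [hMle, sq_nonneg lam]
  have hN28' : 28 ≤ N := by exact_mod_cast hN28
  obtain ⟨h0, hall⟩ := main_pos N hN2
  have hrecN := hrec N hN2
  have htopN := htop N hN2
  have hNR : (0:ℝ) < (N:ℝ) := by linarith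
  -- construct nj
  classical
  have hex : ∃ j : ℕ, lam * ((N:ℝ) - ((j:ℝ)+2)) ≤ (1+lam)*((j:ℝ)+2+1) :=
    ⟨N, by nlinarith [Nat.cast_nonneg (α := ℝ) N]⟩
  set j0 := Nat.find hex with hj0def
  have hPj : lam * ((N:ℝ) - ((j0:ℝ)+2)) ≤ (1+lam)*((j0:ℝ)+2+1) := Nat.find_spec hex
  have hj0le : j0 ≤ N - 3 := by
    apply Nat.find_min' hex
    have hc : ((N - 3 : ℕ) : ℝ) = (N:ℝ) - 3 := by
      push_cast [Nat.cast_sub (show 3 ≤ N by omega)]; ring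
    rw [hc]
    nlinarith
  have hj01 : 1 ≤ j0 := by
    by_contra h
    have hj00 : j0 = 0 := by omega
    rw [hj00] at hPj
    push_cast at hPj
    nlinarith [hMle]
  set nj := j0 + 2 with hnjdef
  have hnj3 : 3 ≤ nj := by omega
  have hnjN : nj + 1 ≤ N := by omega
  have hP : lam * ((N:ℝ) - (nj:ℝ)) ≤ (1+lam) * ((nj:ℝ)+1) := by
    have : ((nj:ℕ):ℝ) = (j0:ℝ) + 2 := by rw [hnjdef]; push_cast; ring
    rw [this]; linarith [hPj]
  have hmin : ∀ m : ℕ, 2 ≤ m → m < nj → (1+lam)*((m:ℝ)+1) < lam*((N:ℝ)-(m:ℝ)) := by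
    intro m hm2 hmnj
    obtain ⟨k, rfl⟩ : ∃ k, m = k + 2 := ⟨m - 2, by omega⟩
    have hknj : k < j0 := by omega
    have := Nat.find_min hex hknj
    push_neg at this
    push_cast
    push_cast at this
    linarith
  -- the supersolution constant
  obtain ⟨B, hBpos, hB⟩ : ∃ B : ℝ, 0 ≤ B ∧ 2*B*(1+lam)^3 = lam^2*(N.choose 3 : ℝ) :=
    ⟨lam^2*(N.choose 3 : ℝ)/(2*(1+lam)^3), by positivity, by field_simp⟩
  have hlow := lowchain lam hlam N hN2 (pi N) htopN hrecN (hall N (by omega) le_rfl).le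
    nj hnj3 hnjN hP hmin B hBpos hB 2 le_rfl (by omega)
  norm_num at hlow
  -- extract pi N 3 ≤ K2 * pi N 2
  have h2pos : 0 < pi N 2 := hall 2 (by omega) (by omega)
  have hc2 : (0:ℝ) < (N.choose 2 : ℝ) := by
    exact_mod_cast Nat.choose_pos (show 2 ≤ N by omega)
  have hY2pos : (0:ℝ) < lam^2*(N.choose 2:ℝ) + B*(1+lam)^2 := by
    nlinarith [mul_pos (pow_pos hlam 2) hc2, mul_nonneg hBpos (pow_nonneg hl1.le 2)]
  have hY3 : lam^3*(N.choose 3:ℝ) + B*(1+lam)^3 = (1+2*lam)*(1+lam)*(B*(1+lam)^2) := by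
    linear_combination (-lam) * hB
  have h32 : pi N 3 ≤ K2 * pi N 2 := by
    have hstep : pi N 2 * (lam^3*(N.choose 3:ℝ) + B*(1+lam)^3)
        ≤ (K2 * pi N 2) * (lam^2*(N.choose 2:ℝ) + B*(1+lam)^2) := by
      rw [hY3, hK2]
      nlinarith [mul_pos (pow_pos hlam 2) hc2, h2pos,
        mul_nonneg (mul_nonneg h2pos.le (mul_pos (pow_pos hlam 2) hc2).le)
          (mul_pos hl1 (by linarith : (0:ℝ) < 1 + 2*lam)).le]
    have hcomb := le_trans hlow hstep
    exact le_of_mul_le_mul_right hcomb hY2pos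
  -- nonnegativity of pi N 3
  have hQ := chain lam hlam N hN2 (pi N) htopN hrecN (hall N (by omega) le_rfl).le
  have h3nonneg : 0 ≤ pi N 3 := (hQ 2 (by omega)).1
  -- base recurrence and pi1
  have hrec1 : 3 * pi N 3 - (3 + lam*N) * pi N 2 + lam*(1+lam)*((N:ℝ)-1)*pi N 1 = 0 := by
    have h := hrecN 1 le_rfl (by omega)
    norm_num at h
    linarith
  have hpi1N := hpi1 N hN2
  have eq1 : (3 + lam*N) * pi N 2 = 3 * pi N 3 + lam^2*(1+lam)*N*((N:ℝ)-1)*pi N 0 := by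
    linear_combination -hrec1 + lam*(1+lam)*((N:ℝ)-1)*hpi1N
  -- final bounds
  have hEq : (2 * pi N 2 - lam * N * (lam * N + 1 - lam) * pi N 0) / pi N 0
      + lam ^ 2 * (N : ℝ) ^ 2 - lam * (1 + 3 * lam) * N
      = (2 * pi N 2 - 2*lam*(1+lam)*N*pi N 0) / pi N 0 := by
    field_simp
    ring
  rw [hEq, abs_div, abs_of_pos h0, div_le_iff₀ h0, abs_le]
  have hMle' : 6*(1+lam)*(1+2*lam) + 10*(1+lam) + 10 ≤ lam * N := by rw [hM0] at hMle; exact hMle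
  have hD : (0:ℝ) < lam*N + 3 - 3*K2 := by rw [hK2]; nlinarith [hMle']
  have hu : (lam*N + 3 - 3*K2) * pi N 2 ≤ lam^2*(1+lam)*N*((N:ℝ)-1)*pi N 0 := by
    nlinarith [eq1, h32]
  have hD3 : (0:ℝ) < 3 + lam*N := by nlinarith [hMle']
  have hp0lN : 0 ≤ pi N 0 * (lam * (N:ℝ)) := mul_nonneg h0.le (by positivity)
  have hp0M : 0 ≤ pi N 0 * (lam * (N:ℝ) - (6*(1+lam)*(1+2*lam) + 10*(1+lam) + 10)) :=
    mul_nonneg h0.le (sub_nonneg.mpr hMle')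
  constructor
  · -- lower bound
    have hL1 : (3+lam*N) * (2*pi N 2 - 2*lam*(1+lam)*N*pi N 0 + C*pi N 0)
        = 6*pi N 3 + pi N 0 * (C*(3+lam*N) - 2*lam^2*(1+lam)*N - 6*lam*(1+lam)*N) := by
      linear_combination 2*eq1
    have hG : 0 ≤ C*(3+lam*N) - 2*lam^2*(1+lam)*N - 6*lam*(1+lam)*N := by
      rw [hC]
      nlinarith [mul_nonneg (show (0:ℝ) ≤ 12*(1+lam)^2*(1+2*lam) by positivity)
        (show (0:ℝ) ≤ lam*N by positivity)]
    have hprod : 0 ≤ (3+lam*N) * (2*pi N 2 - 2*lam*(1+lam)*N*pi N 0 + C*pi N 0) := by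
      rw [hL1]
      have := mul_nonneg h0.le hG
      linarith
    rcases le_or_gt (-(C * pi N 0)) (2 * pi N 2 - 2 * lam * (1 + lam) * ↑N * pi N 0) with h | h
    · exact h
    · exfalso
      have hneg : 2*pi N 2 - 2*lam*(1+lam)*N*pi N 0 + C*pi N 0 < 0 := by linarith
      nlinarith [mul_pos hD3 (neg_pos.mpr hneg)]
  · -- upper bound
    have hU1 : (lam*N + 3 - 3*K2) * (2*pi N 2 - 2*lam*(1+lam)*N*pi N 0 - C*pi N 0)
        ≤ pi N 0 * (2*lam*(1+lam)*N*(3*K2 - 3 - lam) - C*(lam*N + 3 - 3*K2)) := by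
      nlinarith [hu]
    have hq : 0 ≤ C - 4*(1+lam)*(3*K2 - 3 - lam) := by
      rw [hC, hK2]; nlinarith [sq_nonneg lam, hlam.le]
    have hhalf : 0 ≤ lam*N/2 + 3 - 3*K2 := by rw [hK2]; nlinarith [hMle']
    have hEneg : 2*lam*(1+lam)*N*(3*K2 - 3 - lam) - C*(lam*N + 3 - 3*K2) ≤ 0 := by
      have e1 : C*(lam*N/2) ≤ C*(lam*N + 3 - 3*K2) := by nlinarith [mul_nonneg hCpos.le hhalf]
      have e2 : 2*lam*(1+lam)*N*(3*K2 - 3 - lam) ≤ C*(lam*N/2) := by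
        nlinarith [mul_nonneg hq (show (0:ℝ) ≤ lam*N by positivity)]
      linarith
    have hG2 : pi N 0 * (2*lam*(1+lam)*N*(3*K2 - 3 - lam) - C*(lam*N + 3 - 3*K2)) ≤ 0 := by
      nlinarith [mul_nonneg h0.le (neg_nonneg.mpr hEneg)]
    rcases le_or_gt (2 * pi N 2 - 2 * lam * (1 + lam) * ↑N * pi N 0) (C * pi N 0) with h | h
    · exact h
    · exfalso
      have hpos2 : 0 < 2*pi N 2 - 2*lam*(1+lam)*N*pi N 0 - C*pi N 0 := by linarith
      nlinarith [mul_pos hD hpos2]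
end

section
/- Let λ > 0 and α > 0 be fixed. For each N, let μ_N be the positive function on H_N satisfying the balance equations of the regenerative contact process, normalized so that μ_N(1,N) = 1, write v_n = μ_N(1,n), and set m = ⌊λN/(1+λ)⌋. Then v_m / ( ((1+λ)/√(2πλN)) · ((1+λ)/λ)^{N + 2/(1+2λ)} ) → 1 as N → ∞. -/
open Finset

open Filter Topology

/-!
Write `u k = μ (0, k)` and `v k = μ (1, k)` (the first coordinate is the state of the centre).
The only transitions across the cut between levels `n` and `n + 1` are `(1, n) ↔ (1, n + 1)` and
`(0, n + 1) → (0, n)`, so flux balance gives `λ (N - n) v n = (n + 1) (v (n + 1) + u (n + 1))`,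
whence `v m λ^(N - m) = C(N, m) v N ∏_{m < k ≤ N} (1 + u k / v k)`.

The ratio `σ k = v k / u k` satisfies a first-order recurrence, and above the metastable level it
stays between `D k = (1 + 2λ) k - λ N` and `D k + 2 (1 + λ) / λ`. As `D` is an arithmetic
progression of step `1 + 2λ`, the sum `∑ log (1 + 1 / σ k)` is `log (D N / D m) / (1 + 2λ)` up to
`o(1)`, so the product tends to `((1 + λ) / λ)^(2 / (1 + 2λ))`. Finally, by Stirling's formula,
`C(N, m) p^m (1 - p)^(N - m) ~ 1 / √(2π p (1 - p) N)` at the mode `m = ⌊p N⌋` of the binomial law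
with `p = λ / (1 + λ)`.
-/

open Real Asymptotics

theorem flux_out_eq_flux_in_of_balance {α : Type*} [DecidableEq α] {S A : Finset α}
    {r : α → α → ℝ} {μ : α → ℝ}
    (hbal : ∀ x ∈ S, ∑ y ∈ S, μ y * r y x = μ x * ∑ y ∈ S, r x y) (hA : A ⊆ S) :
    ∑ x ∈ A, ∑ y ∈ S \ A, μ x * r x y = ∑ x ∈ A, ∑ y ∈ S \ A, μ y * r y x := by
  have hsplit (g : α → ℝ) : ∑ y ∈ S, g y = ∑ y ∈ A, g y + ∑ y ∈ S \ A, g y := by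
    rw [← sum_sdiff hA, add_comm]
  have h := sum_congr rfl fun x hx => hbal x (hA hx)
  simp only [hsplit, mul_add, mul_sum, sum_add_distrib] at h
  rw [sum_comm (s := A) (t := A) (f := fun x y => μ y * r y x)] at h
  linarith

theorem mem_starStates_s13 {N : ℕ} {x : ℕ × ℕ} :
    x ∈ starStates N ↔ (x.1 = 0 ∨ x.1 = 1) ∧ x.2 ≤ N := by
  simp [starStates]

theorem sum_starStates {N : ℕ} (f : ℕ × ℕ → ℝ) :
    ∑ y ∈ starStates N, f y = ∑ j ∈ range (N + 1), f (0, j) + ∑ j ∈ range (N + 1), f (1, j) := by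
  rw [starStates, sum_product, sum_pair zero_ne_one]

section Rates

variable {lam alpha : ℝ} {N : ℕ}

theorem regenRate_leaf_infection {n : ℕ} (hn : n < N) :
    regenRate lam alpha N (1, n) (1, n + 1) = lam * (N - n) := by
  simp [regenRate, starRate, hn]

theorem regenRate_leaf_recovery_infected {n : ℕ} (hn : n < N) :
    regenRate lam alpha N (1, n + 1) (1, n) = n + 1 := by
  simp [regenRate, starRate, hn, show n ≠ n + 1 + 1 by omega]

theorem regenRate_leaf_recovery_healthy {n : ℕ} (hn : n < N) :
    regenRate lam alpha N (0, n + 1) (0, n) = n + 1 := by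
  simp [regenRate, starRate, hn]

theorem regenRate_centre_recovery {k : ℕ} (hk : k ≤ N) :
    regenRate lam alpha N (1, k) (0, k) = 1 := by
  simp [regenRate, starRate, hk]

theorem regenRate_centre_infection {k : ℕ} (hk : 1 ≤ k) (hkN : k ≤ N) :
    regenRate lam alpha N (0, k) (1, k) = lam * k := by
  simp [regenRate, starRate, hk, hkN, show k ≠ 0 by omega]

theorem sum_regenRate_healthy {k : ℕ} (hk : 1 ≤ k) (hkN : k ≤ N) :
    ∑ y ∈ starStates N, regenRate lam alpha N (0, k) y = (1 + lam) * k := by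
  obtain ⟨n, rfl⟩ : ∃ n, k = n + 1 := ⟨k - 1, by omega⟩
  rw [sum_starStates, sum_eq_single_of_mem n (mem_range.2 (by omega)),
    sum_eq_single_of_mem (n + 1) (mem_range.2 (by omega)), regenRate_leaf_recovery_healthy hkN,
    regenRate_centre_infection hk hkN]
  · push_cast; ring
  all_goals intro j _ hj; grind [regenRate, starRate]

end Rates

theorem floor_mul_le_self {p : ℝ} (hp : p ≤ 1) (N : ℕ) : ⌊p * N⌋₊ ≤ N :=
  Nat.floor_le_of_le (by nlinarith [(Nat.cast_nonneg N : (0 : ℝ) ≤ N)])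

theorem floor_mul_div_one_add_le_self {lam : ℝ} (hlam : 0 ≤ lam) (N : ℕ) :
    ⌊lam * N / (1 + lam)⌋₊ ≤ N := by
  simpa only [div_mul_eq_mul_div] using
    floor_mul_le_self ((div_le_one (by positivity)).2 (by linarith : lam ≤ 1 + lam)) N

namespace IsBalanced

variable {lam alpha : ℝ} {N : ℕ} {μ : ℕ × ℕ → ℝ}

theorem level_cut_eq (hb : IsBalanced lam alpha N μ) {n : ℕ} (hn : n < N) :
    lam * (N - n) * μ (1, n) = (n + 1) * (μ (1, n + 1) + μ (0, n + 1)) := by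
  have h := flux_out_eq_flux_in_of_balance hb (filter_subset (fun x => n < x.2) (starStates N))
  rw [← sum_product' (f := fun x y => μ x * regenRate lam alpha N x y),
    ← sum_product' (f := fun x y => μ y * regenRate lam alpha N y x),
    sum_eq_add_of_mem ((1, n + 1), (1, n)) ((0, n + 1), (0, n))
      (by simp [mem_starStates_s13, hn, hn.le]) (by simp [mem_starStates_s13, hn, hn.le]) (by simp),
    sum_eq_single_of_mem ((1, n + 1), (1, n)) (by simp [mem_starStates_s13, hn, hn.le])] at h
  · dsimp only at h
    rw [regenRate_leaf_recovery_infected hn, regenRate_leaf_recovery_healthy hn,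
      regenRate_leaf_infection hn] at h
    linear_combination -h
  all_goals
    rintro ⟨⟨a, i⟩, ⟨b, j⟩⟩ hp hne
    simp only [mem_product, mem_filter, mem_starStates_s13, Finset.mem_sdiff, not_and] at hp
    grind [regenRate, starRate]

theorem healthy_eq (hb : IsBalanced lam alpha N μ) {k : ℕ} (hk : 1 ≤ k) (hkN : k < N) :
    (1 + lam) * k * μ (0, k) = μ (1, k) + (k + 1) * μ (0, k + 1) := by
  have h := hb (0, k) (mem_starStates_s13.2 ⟨.inl rfl, hkN.le⟩)
  rw [sum_regenRate_healthy hk hkN.le, sum_starStates,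
    sum_eq_single_of_mem (k + 1) (mem_range.2 (by omega)),
    sum_eq_single_of_mem k (mem_range.2 (by omega)), regenRate_leaf_recovery_healthy hkN,
    regenRate_centre_recovery hkN.le] at h
  · linear_combination -h
  all_goals intro j _ hj; grind [regenRate, starRate]

theorem healthy_eq_top (hb : IsBalanced lam alpha N μ) (hN : 1 ≤ N) :
    (1 + lam) * N * μ (0, N) = μ (1, N) := by
  have h := hb (0, N) (mem_starStates_s13.2 ⟨.inl rfl, le_rfl⟩)
  rw [sum_regenRate_healthy hN le_rfl, sum_starStates, sum_eq_zero,
    sum_eq_single_of_mem N (mem_range.2 N.lt_succ_self), regenRate_centre_recovery le_rfl] at h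
  · linear_combination -h
  all_goals intro j _; grind [regenRate, starRate]

theorem ratio_recurrence (hb : IsBalanced lam alpha N μ) (hpos : ∀ x ∈ starStates N, 0 < μ x)
    {k : ℕ} (hk : 1 ≤ k) (hkN : k < N) :
    μ (1, k) / μ (0, k) * (1 + μ (1, k + 1) / μ (0, k + 1) + lam * (N - k)) =
      (1 + lam) * k * (1 + μ (1, k + 1) / μ (0, k + 1)) := by
  have hu := hpos (0, k) (mem_starStates_s13.2 ⟨.inl rfl, hkN.le⟩)
  have hu' := hpos (0, k + 1) (mem_starStates_s13.2 ⟨.inl rfl, hkN⟩)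
  field_simp
  linear_combination μ (0, k + 1) * hb.level_cut_eq hkN -
    (μ (0, k + 1) + μ (1, k + 1)) * hb.healthy_eq hk hkN

theorem infected_mul_pow_eq (hb : IsBalanced lam alpha N μ)
    (hpos : ∀ x ∈ starStates N, 0 < μ x) {n : ℕ} (hn : n ≤ N) :
    μ (1, n) * lam ^ (N - n) =
      N.choose n * μ (1, N) * ∏ k ∈ Ico n N, (1 + μ (0, k + 1) / μ (1, k + 1)) := by
  induction hn using Nat.decreasingInduction with
  | self => simp
  | of_succ n hn ih =>
    have hv := hpos (1, n + 1) (mem_starStates_s13.2 ⟨.inr rfl, hn⟩)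
    have hNn : (N : ℝ) - n ≠ 0 := sub_ne_zero.2 (by exact_mod_cast hn.ne')
    have hchoose : (N.choose (n + 1) : ℝ) * (n + 1) = N.choose n * (N - n) := by
      have h := congrArg (Nat.cast : ℕ → ℝ) (Nat.choose_succ_right_eq N n)
      push_cast [Nat.cast_sub hn.le] at h
      exact h
    rw [prod_eq_prod_Ico_succ_bot hn, show N - n = N - (n + 1) + 1 by omega, pow_succ]
    refine mul_left_cancel₀ hNn ?_
    calc ((N : ℝ) - n) * (μ (1, n) * (lam ^ (N - (n + 1)) * lam))
        = lam ^ (N - (n + 1)) * (lam * (N - n) * μ (1, n)) := by ring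
      _ = (n + 1) * (1 + μ (0, n + 1) / μ (1, n + 1)) * (μ (1, n + 1) * lam ^ (N - (n + 1))) := by
        rw [hb.level_cut_eq hn]; field_simp
      _ = _ := by
        rw [ih]
        linear_combination (μ (1, N) * (1 + μ (0, n + 1) / μ (1, n + 1)) *
          ∏ k ∈ Ico (n + 1) N, (1 + μ (0, k + 1) / μ (1, k + 1))) * hchoose

end IsBalanced

def starGap (lam : ℝ) (N k : ℕ) : ℝ := (1 + 2 * lam) * k - lam * N

theorem starGap_succ (lam : ℝ) (N k : ℕ) :
    starGap lam N (k + 1) = starGap lam N k + (1 + 2 * lam) := by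
  simp only [starGap]; push_cast; ring

theorem starGap_le_and_le_of_recurrence {lam : ℝ} (hlam : 0 < lam) {N : ℕ} {σ : ℕ → ℝ}
    (htop : σ N = (1 + lam) * N)
    (hrec : ∀ k, 1 ≤ k → k < N →
      σ k * (1 + σ (k + 1) + lam * (N - k)) = (1 + lam) * k * (1 + σ (k + 1)))
    {k : ℕ} (hkN : k ≤ N) (hk : lam * (N - k) < k) :
    starGap lam N k ≤ σ k ∧ σ k ≤ starGap lam N k + 2 * (1 + lam) / lam := by
  induction hkN using Nat.decreasingInduction with
  | self =>
    have hc : 0 < 2 * (1 + lam) / lam := by positivity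
    rw [htop, starGap]
    constructor <;> linarith
  | of_succ k hkN ih =>
    have hk1 : 1 ≤ k := by
      by_contra! h0
      simp only [Nat.lt_one_iff.1 h0, CharP.cast_eq_zero, sub_zero] at hk
      nlinarith [(Nat.cast_nonneg N : (0 : ℝ) ≤ N)]
    have hkN' : (k : ℝ) + 1 ≤ N := by exact_mod_cast hkN
    obtain ⟨hlo, hhi⟩ := ih (by push_cast; nlinarith)
    have hrec := hrec k hk1 hkN
    rw [starGap_succ] at hlo hhi
    set g := starGap lam N k with hg
    set c := 2 * (1 + lam) / lam with hc
    have hgφ : g + lam * (N - k) = (1 + lam) * k := by rw [hg, starGap]; ring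
    have hcg : (2 + 2 * lam) * (lam * (N - k)) ≤ c * g := by
      rw [hc, hg, starGap, div_mul_eq_mul_div, le_div_iff₀ hlam]
      nlinarith [mul_pos (pow_pos (by linarith : (0 : ℝ) < 1 + lam) 2) (sub_pos.2 hk)]
    have hφ : 0 ≤ lam * (N - k) := by nlinarith
    have hg0 : 0 < g := by nlinarith
    have hD : 0 < 1 + σ (k + 1) + lam * (N - k) := by linarith
    rw [← hgφ] at hrec
    -- after multiplying by `hD`, the lower bound needs only `g ≤ σ (k + 1)`, the upper one `hcg`
    constructor <;> refine le_of_mul_le_mul_right ?_ hD <;> rw [hrec] <;> nlinarith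

theorem div_add_le_log_add_sub_log {x s : ℝ} (hx : 0 < x) (hs : 0 < s) :
    s / (x + s) ≤ log (x + s) - log x := by
  rw [← log_div (by positivity) hx.ne']
  have h := one_sub_inv_le_log_of_pos (show 0 < (x + s) / x by positivity)
  rw [inv_div] at h
  calc s / (x + s) = 1 - x / (x + s) := by field_simp; ring
    _ ≤ _ := h

theorem log_add_sub_log_le_div {x s : ℝ} (hx : 0 < x) (hs : 0 ≤ s) :
    log (x + s) - log x ≤ s / x := by
  rw [← log_div (by positivity) hx.ne']
  calc log ((x + s) / x) ≤ (x + s) / x - 1 := log_le_sub_one_of_pos (by positivity)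
    _ = s / x := by field_simp; ring

theorem sum_log_one_add_inv_le_and_le {s c : ℝ} (hs : 0 < s) (hc : 0 ≤ c) {a σ : ℕ → ℝ}
    (ha : ∀ k, a (k + 1) = a k + s) {m n : ℕ} (hmn : m ≤ n) (ham : 0 < a m)
    (hσ : ∀ k ∈ Ico m n, a (k + 1) ≤ σ (k + 1) ∧ σ (k + 1) ≤ a (k + 1) + c) :
    (log (a n + (s + c + 1)) - log (a m + (s + c + 1))) / s ≤
        ∑ k ∈ Ico m n, log (1 + (σ (k + 1))⁻¹) ∧
      ∑ k ∈ Ico m n, log (1 + (σ (k + 1))⁻¹) ≤ (log (a n) - log (a m)) / s := by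
  have hpos (k) (hk : m ≤ k) : 0 < a k := by
    induction k, hk using Nat.le_induction with
    | base => exact ham
    | succ k _ ih => rw [ha]; linarith
  have hlog (k) (hk : k ∈ Ico m n) :
      log (1 + (σ (k + 1))⁻¹) = log (σ (k + 1) + 1) - log (σ (k + 1)) := by
    have : 0 < σ (k + 1) := by linarith [(hσ k hk).1, hpos k (mem_Ico.1 hk).1, ha k]
    rw [← log_div (by positivity) this.ne']
    field_simp
  rw [sum_congr rfl hlog]
  constructor
  · rw [← sum_Ico_sub (fun k => log (a k + (s + c + 1))) hmn, sum_div]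
    refine sum_le_sum fun k hk => ?_
    have hak := hpos k (mem_Ico.1 hk).1
    obtain ⟨h1, h2⟩ := hσ k hk
    rw [ha k] at h1 h2 ⊢
    calc (log (a k + s + (s + c + 1)) - log (a k + (s + c + 1))) / s
        ≤ (a k + (s + c + 1))⁻¹ := by
          rw [div_le_iff₀ hs, inv_mul_eq_div, add_right_comm]
          exact log_add_sub_log_le_div (by positivity) hs.le
      _ ≤ 1 / (σ (k + 1) + 1) := by
          rw [inv_eq_one_div]; exact one_div_le_one_div_of_le (by linarith) (by linarith)
      _ ≤ _ := by simpa using div_add_le_log_add_sub_log (by linarith : 0 < σ (k + 1)) one_pos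
  · rw [← sum_Ico_sub (fun k => log (a k)) hmn, sum_div]
    refine sum_le_sum fun k hk => ?_
    have hak := hpos k (mem_Ico.1 hk).1
    obtain ⟨h1, -⟩ := hσ k hk
    rw [ha k] at h1 ⊢
    calc log (σ (k + 1) + 1) - log (σ (k + 1)) ≤ 1 / σ (k + 1) :=
          log_add_sub_log_le_div (by linarith) zero_le_one
      _ ≤ 1 / (a k + s) := by gcongr
      _ ≤ _ := by
          rw [le_div_iff₀ hs, div_mul_eq_mul_div, one_mul]
          exact div_add_le_log_add_sub_log hak hs

theorem IsBalanced.log_prod_bounds {lam alpha : ℝ} (hlam : 0 < lam) {N : ℕ} {μ : ℕ × ℕ → ℝ}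
    (hb : IsBalanced lam alpha N μ) (hpos : ∀ x ∈ starStates N, 0 < μ x) (hN : 1 ≤ N)
    (hgap : 0 < starGap lam N ⌊lam * N / (1 + lam)⌋₊) :
    (log (starGap lam N N + (1 + 2 * lam + 2 * (1 + lam) / lam + 1)) -
        log (starGap lam N ⌊lam * N / (1 + lam)⌋₊ + (1 + 2 * lam + 2 * (1 + lam) / lam + 1))) /
        (1 + 2 * lam) ≤
      log (∏ k ∈ Ico ⌊lam * N / (1 + lam)⌋₊ N, (1 + μ (0, k + 1) / μ (1, k + 1))) ∧
    log (∏ k ∈ Ico ⌊lam * N / (1 + lam)⌋₊ N, (1 + μ (0, k + 1) / μ (1, k + 1))) ≤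
      (log (starGap lam N N) - log (starGap lam N ⌊lam * N / (1 + lam)⌋₊)) / (1 + 2 * lam) := by
  set m := ⌊lam * N / (1 + lam)⌋₊ with hm
  have hv (k) (hk : k ≤ N) : 0 < μ (1, k) := hpos _ (mem_starStates_s13.2 ⟨.inr rfl, hk⟩)
  have hu (k) (hk : k ≤ N) : 0 < μ (0, k) := hpos _ (mem_starStates_s13.2 ⟨.inl rfl, hk⟩)
  have htop : μ (1, N) / μ (0, N) = (1 + lam) * N := by
    rw [← hb.healthy_eq_top hN]; field_simp [(hu N le_rfl).ne']
  have hσ (k) (hk : k ∈ Ico m N) :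
      starGap lam N (k + 1) ≤ μ (1, k + 1) / μ (0, k + 1) ∧
        μ (1, k + 1) / μ (0, k + 1) ≤ starGap lam N (k + 1) + 2 * (1 + lam) / lam := by
    refine starGap_le_and_le_of_recurrence hlam (σ := fun k => μ (1, k) / μ (0, k)) htop
      (fun k hk hkN => hb.ratio_recurrence hpos hk hkN) (mem_Ico.1 hk).2 ?_
    have h1 := Nat.lt_floor_add_one (lam * N / (1 + lam))
    have h2 : (m : ℝ) ≤ k := by exact_mod_cast (mem_Ico.1 hk).1
    rw [← hm, div_lt_iff₀ (by positivity)] at h1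
    push_cast
    nlinarith
  have hlog : log (∏ k ∈ Ico m N, (1 + μ (0, k + 1) / μ (1, k + 1))) =
      ∑ k ∈ Ico m N, log (1 + (μ (1, k + 1) / μ (0, k + 1))⁻¹) := by
    rw [log_prod fun k hk => ?_]
    · simp_rw [inv_div]
    have := hu (k + 1) (mem_Ico.1 hk).2
    have := hv (k + 1) (mem_Ico.1 hk).2
    positivity
  rw [hlog]
  exact sum_log_one_add_inv_le_and_le (c := 2 * (1 + lam) / lam)
    (σ := fun k => μ (1, k) / μ (0, k)) (by positivity) (by positivity) (starGap_succ lam N)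
    (floor_mul_div_one_add_le_self hlam.le N) hgap hσ

theorem tendsto_log_sub_log_of_div {x y : ℕ → ℝ} {a b : ℝ} (ha : 0 < a) (hb : 0 < b)
    (hx : Tendsto (fun N => x N / N) atTop (𝓝 a)) (hy : Tendsto (fun N => y N / N) atTop (𝓝 b)) :
    Tendsto (fun N => log (x N) - log (y N)) atTop (𝓝 (log a - log b)) := by
  refine ((hx.log ha.ne').sub (hy.log hb.ne')).congr' ?_
  filter_upwards [hx.eventually_const_lt ha, hy.eventually_const_lt hb, eventually_ne_atTop 0]
    with N hxN hyN hN
  have hx0 : x N ≠ 0 := by rintro h; rw [h, zero_div] at hxN; linarith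
  have hy0 : y N ≠ 0 := by rintro h; rw [h, zero_div] at hyN; linarith
  rw [log_div hx0 (Nat.cast_ne_zero.2 hN), log_div hy0 (Nat.cast_ne_zero.2 hN)]
  ring

section StarGap

variable {lam : ℝ}

theorem tendsto_starGap_floor_add_div (hlam : 0 < lam) (c : ℝ) :
    Tendsto (fun N : ℕ => (starGap lam N ⌊lam * N / (1 + lam)⌋₊ + c) / N) atTop
      (𝓝 (lam ^ 2 / (1 + lam))) := by
  have hm : Tendsto (fun N : ℕ => (⌊lam * N / (1 + lam)⌋₊ : ℝ) / N) atTop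
      (𝓝 (lam / (1 + lam))) := by
    simp_rw [mul_div_right_comm lam]
    exact (tendsto_nat_floor_mul_div_atTop (by positivity)).comp tendsto_natCast_atTop_atTop
  have h := ((hm.const_mul (1 + 2 * lam)).sub_const lam).add
    (tendsto_const_div_atTop_nhds_zero_nat c)
  rw [add_zero, show (1 + 2 * lam) * (lam / (1 + lam)) - lam = lam ^ 2 / (1 + lam) by
    field_simp; ring] at h
  refine h.congr' ?_
  filter_upwards [eventually_ne_atTop 0] with N hN
  simp only [starGap]
  field_simp

theorem tendsto_starGap_self_add_div (c : ℝ) :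
    Tendsto (fun N : ℕ => (starGap lam N N + c) / N) atTop (𝓝 (1 + lam)) := by
  have h := (tendsto_const_nhds (x := 1 + lam)).add (tendsto_const_div_atTop_nhds_zero_nat c)
  rw [add_zero] at h
  refine h.congr' ?_
  filter_upwards [eventually_ne_atTop 0] with N hN
  simp only [starGap]
  field_simp
  ring

theorem tendsto_log_starGap_sub (hlam : 0 < lam) (c : ℝ) :
    Tendsto (fun N : ℕ => log (starGap lam N N + c) -
        log (starGap lam N ⌊lam * N / (1 + lam)⌋₊ + c)) atTop
      (𝓝 (2 * log ((1 + lam) / lam))) := by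
  convert tendsto_log_sub_log_of_div (by positivity) (by positivity)
    (tendsto_starGap_self_add_div c) (tendsto_starGap_floor_add_div hlam c) using 2
  rw [← log_div (by positivity) (by positivity),
    show (1 + lam) / (lam ^ 2 / (1 + lam)) = ((1 + lam) / lam) ^ 2 by field_simp, log_pow]
  push_cast
  ring

end StarGap

theorem tendsto_prod_one_add_healthy_div_infected {lam alpha : ℝ} (hlam : 0 < lam)
    {μ : ℕ → ℕ × ℕ → ℝ} (hpos : ∀ N, ∀ x ∈ starStates N, 0 < μ N x)
    (hbal : ∀ N, IsBalanced lam alpha N (μ N)) :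
    Tendsto (fun N : ℕ => ∏ k ∈ Ico ⌊lam * N / (1 + lam)⌋₊ N, (1 + μ N (0, k + 1) / μ N (1, k + 1)))
      atTop (𝓝 (((1 + lam) / lam) ^ (2 / (1 + 2 * lam)))) := by
  have hgap : ∀ᶠ N : ℕ in atTop, 0 < starGap lam N ⌊lam * N / (1 + lam)⌋₊ := by
    filter_upwards [(tendsto_starGap_floor_add_div hlam 0).eventually_const_lt
      (by positivity : 0 < lam ^ 2 / (1 + lam)), eventually_gt_atTop 0] with N h hN
    rw [add_zero] at h
    exact (div_pos_iff_of_pos_right (Nat.cast_pos.2 hN)).1 h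
  have hbounds := (tendsto_log_starGap_sub hlam (1 + 2 * lam + 2 * (1 + lam) / lam + 1)).div_const
    (1 + 2 * lam)
  have hlog := tendsto_of_tendsto_of_tendsto_of_le_of_le' hbounds
    (by simpa using (tendsto_log_starGap_sub hlam 0).div_const (1 + 2 * lam))
    (by filter_upwards [hgap, eventually_ge_atTop 1] with N hg hN
        exact ((hbal N).log_prod_bounds hlam (hpos N) hN hg).1)
    (by filter_upwards [hgap, eventually_ge_atTop 1] with N hg hN
        exact ((hbal N).log_prod_bounds hlam (hpos N) hN hg).2)
  rw [rpow_def_of_pos (by positivity), ← mul_div_assoc, mul_comm (log _)]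
  refine hlog.rexp.congr fun N => exp_log (prod_pos fun k hk => ?_)
  have := hpos N (0, k + 1) (mem_starStates_s13.2 ⟨.inl rfl, (mem_Ico.1 hk).2⟩)
  have := hpos N (1, k + 1) (mem_starStates_s13.2 ⟨.inr rfl, (mem_Ico.1 hk).2⟩)
  positivity

theorem pow_le_exp_mul_sub_one {t : ℝ} (ht : 0 ≤ t) (n : ℕ) : t ^ n ≤ exp (n * (t - 1)) := by
  rw [exp_nat_mul]
  exact pow_le_pow_left₀ ht (by linarith [add_one_le_exp (t - 1)]) n

theorem exp_neg_le_div_pow_mul_div_pow {x y : ℝ} {k j : ℕ} (hx : 0 < x) (hy : 0 < y)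
    (hk : 0 < k) (hj : 0 < j) (hsum : x + y = k + j) :
    exp (-((k - x) ^ 2 * (x⁻¹ + y⁻¹))) ≤ (x / k) ^ k * (y / j) ^ j := by
  have hk' : (0 : ℝ) < k := by exact_mod_cast hk
  have hj' : (0 : ℝ) < j := by exact_mod_cast hj
  have h1 := inv_anti₀ (by positivity) (pow_le_exp_mul_sub_one (by positivity : 0 ≤ k / x) k)
  have h2 := inv_anti₀ (by positivity) (pow_le_exp_mul_sub_one (by positivity : 0 ≤ j / y) j)
  rw [← inv_pow, inv_div, ← exp_neg] at h1 h2
  calc exp (-((k - x) ^ 2 * (x⁻¹ + y⁻¹)))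
      = exp (-(k * (k / x - 1))) * exp (-(j * (j / y - 1))) := by
        rw [← exp_add]; congr 1
        rw [show (j : ℝ) = x + y - k by linarith]
        field_simp; ring
    _ ≤ _ := mul_le_mul h1 h2 (exp_pos _).le (by positivity)

theorem div_pow_mul_div_pow_le_one {x y : ℝ} {k j : ℕ} (hx : 0 ≤ x) (hy : 0 ≤ y)
    (hk : 0 < k) (hj : 0 < j) (hsum : x + y = k + j) : (x / k) ^ k * (y / j) ^ j ≤ 1 := by
  calc (x / k) ^ k * (y / j) ^ j ≤ exp (k * (x / k - 1)) * exp (j * (y / j - 1)) :=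
        mul_le_mul (pow_le_exp_mul_sub_one (by positivity) k)
          (pow_le_exp_mul_sub_one (by positivity) j) (by positivity) (exp_pos _).le
    _ = 1 := by
      rw [← exp_add, exp_eq_one_iff]
      field_simp
      linarith

theorem choose_isEquivalent {k : ℕ → ℕ} (hk : Tendsto k atTop atTop)
    (hj : Tendsto (fun N => N - k N) atTop atTop) (hkN : ∀ N, k N ≤ N) :
    (fun N : ℕ => (N.choose (k N) : ℝ)) ~[atTop] fun N =>
      √(2 * N * π) / (√(2 * k N * π) * √(2 * (N - k N : ℕ) * π)) *
        ((N : ℝ) ^ N / ((k N : ℝ) ^ k N * ((N - k N : ℕ) : ℝ) ^ (N - k N))) := by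
  have hst := Stirling.factorial_isEquivalent_stirling
  refine ((hst.div ((hst.comp_tendsto hk).mul (hst.comp_tendsto hj))).congr_left
    (Eventually.of_forall fun N => ?_)).congr_right (Eventually.of_forall fun N => ?_)
  · simp [Nat.cast_choose ℝ (hkN N)]
  · have he : exp 1 ^ N = exp 1 ^ k N * exp 1 ^ (N - k N) := by
      rw [← pow_add, Nat.add_sub_cancel' (hkN N)]
    simp only [Function.comp, Pi.div_apply, Pi.mul_apply, div_pow, he]
    field_simp

section Binomial

variable {p : ℝ}

theorem tendsto_sub_floor_mul_div (hp0 : 0 ≤ p) (hp1 : p ≤ 1) :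
    Tendsto (fun N : ℕ => ((N - ⌊p * N⌋₊ : ℕ) : ℝ) / N) atTop (𝓝 (1 - p)) := by
  refine (tendsto_const_nhds.sub
    ((tendsto_nat_floor_mul_div_atTop hp0).comp tendsto_natCast_atTop_atTop)).congr' ?_
  filter_upwards [eventually_ne_atTop 0] with N hN
  simp only [Function.comp, Nat.cast_sub (floor_mul_le_self hp1 N)]
  field_simp

theorem tendsto_div_pow_mul_div_pow_floor (hp0 : 0 < p) (hp1 : p < 1) :
    Tendsto (fun N : ℕ => (p * N / ⌊p * N⌋₊) ^ ⌊p * N⌋₊ *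
      ((1 - p) * N / (N - ⌊p * N⌋₊ : ℕ)) ^ (N - ⌊p * N⌋₊)) atTop (𝓝 1) := by
  have hlow : Tendsto (fun N : ℕ => exp (-((p⁻¹ + (1 - p)⁻¹) / N))) atTop (𝓝 1) := by
    simpa using ((tendsto_const_div_atTop_nhds_zero_nat (p⁻¹ + (1 - p)⁻¹)).neg).rexp
  refine tendsto_of_tendsto_of_tendsto_of_le_of_le' hlow tendsto_const_nhds ?_ ?_
  all_goals
    filter_upwards [(tendsto_nat_floor_mul_atTop p hp0).eventually_gt_atTop 0,
      ((tendsto_sub_floor_mul_div hp0.le hp1.le).eventually_const_lt (sub_pos.2 hp1)),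
      eventually_gt_atTop 0] with N hk hj hN
    have hj : 0 < N - ⌊p * N⌋₊ := Nat.pos_of_ne_zero fun h => by
      rw [h, Nat.cast_zero, zero_div] at hj; linarith
    have hN' : (0 : ℝ) < N := by exact_mod_cast hN
    have hsum : p * N + (1 - p) * N = ⌊p * N⌋₊ + ((N - ⌊p * N⌋₊ : ℕ) : ℝ) := by
      rw [Nat.cast_sub (floor_mul_le_self hp1.le N)]; ring
  · refine le_trans ?_ (exp_neg_le_div_pow_mul_div_pow (by positivity)
      (by nlinarith) hk hj hsum)
    have h1 := Nat.floor_le (by positivity : 0 ≤ p * N)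
    have h2 := Nat.lt_floor_add_one (p * N)
    have hsq : ((⌊p * N⌋₊ : ℝ) - p * N) ^ 2 ≤ 1 := by
      rw [sq_le_one_iff_abs_le_one, abs_le]; constructor <;> linarith
    have hq : 0 < 1 - p := sub_pos.2 hp1
    gcongr
    calc ((⌊p * N⌋₊ : ℝ) - p * N) ^ 2 * ((p * N)⁻¹ + ((1 - p) * N)⁻¹)
        ≤ 1 * ((p * N)⁻¹ + ((1 - p) * N)⁻¹) := by gcongr
      _ = (p⁻¹ + (1 - p)⁻¹) / N := by field_simp
  · exact div_pow_mul_div_pow_le_one (by positivity) (by nlinarith) hk hj hsum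

theorem tendsto_sub_floor_mul_atTop (hp0 : 0 ≤ p) (hp : p < 1) :
    Tendsto (fun N : ℕ => N - ⌊p * N⌋₊) atTop atTop := by
  rw [← tendsto_natCast_atTop_iff (R := ℝ)]
  refine tendsto_atTop_mono (fun N => ?_)
    (tendsto_natCast_atTop_atTop.const_mul_atTop (sub_pos.2 hp))
  rw [Nat.cast_sub (floor_mul_le_self hp.le N)]
  linarith [Nat.floor_le (by positivity : 0 ≤ p * N)]

theorem tendsto_sqrt_mul_div_sqrt_floor (hp0 : 0 < p) (hp1 : p < 1) :
    Tendsto (fun N : ℕ => √(2 * N * π) / (√(2 * ⌊p * N⌋₊ * π) *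
      √(2 * (N - ⌊p * N⌋₊ : ℕ) * π)) * √(2 * π * p * (1 - p) * N)) atTop (𝓝 1) := by
  have hq := sub_pos.2 hp1
  have h := (tendsto_const_nhds (x := p * (1 - p))).div
    (((tendsto_nat_floor_mul_div_atTop hp0.le).comp tendsto_natCast_atTop_atTop).mul
      (tendsto_sub_floor_mul_div hp0.le hp1.le)) (by positivity) |>.sqrt
  rw [div_self (by positivity), sqrt_one] at h
  refine h.congr' ?_
  filter_upwards [(tendsto_nat_floor_mul_atTop p hp0).eventually_gt_atTop 0,
    (tendsto_sub_floor_mul_atTop hp0.le hp1).eventually_gt_atTop 0] with N hk hj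
  have hN : (0 : ℝ) < N := by exact_mod_cast hk.trans_le (floor_mul_le_self hp1.le N)
  simp only [Function.comp, Pi.div_apply]
  rw [eq_comm, ← sqrt_mul (by positivity), div_mul_eq_mul_div, ← sqrt_mul (by positivity),
    ← sqrt_div (by positivity)]
  congr 1
  field_simp

theorem tendsto_choose_floor_mul_pow_mul_sqrt (hp0 : 0 < p) (hp1 : p < 1) :
    Tendsto (fun N : ℕ => (N.choose ⌊p * N⌋₊ : ℝ) *
      (p ^ ⌊p * N⌋₊ * (1 - p) ^ (N - ⌊p * N⌋₊) * √(2 * π * p * (1 - p) * N))) atTop (𝓝 1) := by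
  have hkN := floor_mul_le_self hp1.le
  refine (((choose_isEquivalent (tendsto_nat_floor_mul_atTop p hp0)
    (tendsto_sub_floor_mul_atTop hp0.le hp1) hkN).mul IsEquivalent.refl).tendsto_nhds_iff).2 ?_
  have h := (tendsto_sqrt_mul_div_sqrt_floor hp0 hp1).mul
    (tendsto_div_pow_mul_div_pow_floor hp0 hp1)
  rw [one_mul] at h
  refine h.congr' (Eventually.of_forall fun N => ?_)
  have hpow : (N : ℝ) ^ N = (N : ℝ) ^ ⌊p * N⌋₊ * (N : ℝ) ^ (N - ⌊p * N⌋₊) := by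
    rw [← pow_add, Nat.add_sub_cancel' (hkN N)]
  simp only [Pi.mul_apply, mul_pow, div_pow, hpow]
  ring

end Binomial

theorem mass_at_metastable_general
    (lam alpha : ℝ) (hlam : 0 < lam)
    (μ : ℕ → (ℕ × ℕ) → ℝ)
    (hpos : ∀ N : ℕ, ∀ x ∈ starStates N, 0 < μ N x)
    (hbal : ∀ N : ℕ, IsBalanced lam alpha N (μ N))
    (hnorm : ∀ N : ℕ, μ N (1, N) = 1) :
    Tendsto (fun N : ℕ =>
        μ N (1, ⌊lam * N / (1 + lam)⌋₊) /
          (((1 + lam) / Real.sqrt (2 * Real.pi * lam * N)) *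
            ((1 + lam) / lam) ^ ((N : ℝ) + 2 / (1 + 2 * lam))))
      atTop (𝓝 1) := by
  have hK : 0 < ((1 + lam) / lam) ^ (2 / (1 + 2 * lam)) := by positivity
  have h := ((tendsto_choose_floor_mul_pow_mul_sqrt (p := lam / (1 + lam)) (by positivity)
    ((div_lt_one (by positivity)).2 (by linarith))).mul
    (tendsto_prod_one_add_healthy_div_infected hlam hpos hbal)).div_const
    (((1 + lam) / lam) ^ (2 / (1 + 2 * lam)))
  rw [one_mul, div_self hK.ne'] at h
  refine h.congr' ?_
  filter_upwards [eventually_gt_atTop 0] with N hN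
  simp only [div_mul_eq_mul_div lam (1 + lam)]
  set m := ⌊lam * N / (1 + lam)⌋₊
  have hmN : m ≤ N := floor_mul_div_one_add_le_self hlam.le N
  have hprod := (hbal N).infected_mul_pow_eq (hpos N) hmN
  rw [hnorm N, mul_one] at hprod
  have hsqrt : √(2 * π * (lam / (1 + lam)) * (1 - lam / (1 + lam)) * N) =
      √(2 * π * lam * N) / (1 + lam) := by
    rw [show 2 * π * (lam / (1 + lam)) * (1 - lam / (1 + lam)) * N =
        2 * π * lam * N / (1 + lam) ^ 2 by field_simp; ring,
      sqrt_div' _ (by positivity), sqrt_sq (by positivity)]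
  have hpow (x : ℝ) : x ^ N = x ^ m * x ^ (N - m) := by rw [← pow_add, Nat.add_sub_cancel' hmN]
  rw [hsqrt, rpow_add (by positivity), rpow_natCast, hpow ((1 + lam) / lam),
    eq_div_iff (by positivity), ← mul_right_cancel_iff_of_pos (pow_pos hlam (N - m)), hprod,
    one_sub_div (by positivity), add_sub_cancel_right]
  simp only [div_pow]
  field_simp
  ring

/-- **Mass at the metastable state** (Lemma `lem:mass at metastable`): with
`m = ⌊λN/(1+λ)⌋`, one has
`v_m ≃ ((1+λ)/√(2πλN)) ((1+λ)/λ)^{N + 2/(1+2λ)}` as `N → ∞`. -/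
theorem mass_at_metastable
    (lam alpha : ℝ) (hlam : 0 < lam) (halpha : 0 < alpha)
    (μ : ℕ → (ℕ × ℕ) → ℝ)
    (hpos : ∀ N : ℕ, ∀ x ∈ starStates N, 0 < μ N x)
    (hbal : ∀ N : ℕ, IsBalanced lam alpha N (μ N))
    (hnorm : ∀ N : ℕ, μ N (1, N) = 1) :
    Tendsto (fun N : ℕ =>
        μ N (1, ⌊lam * N / (1 + lam)⌋₊) /
          (((1 + lam) / Real.sqrt (2 * Real.pi * lam * N)) *
            ((1 + lam) / lam) ^ ((N : ℝ) + 2 / (1 + 2 * lam))))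
      atTop (𝓝 1) :=
  mass_at_metastable_general lam alpha hlam μ hpos hbal hnorm
end
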